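/- arXiv:1001.2477 — 6 statements merged into one kernel-verified Lean document; each statement's English description precedes it below -/
import Mathlib

section
/- For the function R(z) = (z/e)^z √(2πz) / Γ(z+1) defined for z > 0, we have 0 < R(z) < 1 for all z > 0, and R(z) → 1 as z → ∞. -/
/-!
Write `R = exp (-μ)` with Binet's function `μ(x) = log Γ(x + 1) - log ((x / e) ^ x √(2πx))`.
The series `log (1 + 1/x) = 2 ∑ (2x + 1)^(-(2k+1)) / (2k + 1)` gives
`0 < μ(x) - μ(x + 1) ≤ 1/(12x) - 1/(12(x + 1))`, so along `x + ℕ` the function `μ` decreases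
while `μ - 1/(12·)` increases. Their common limit is `0`: at the integers this is Stirling's
formula for `n!`, and Euler's limit formula `Γ(x + n + 1) ~ n! n^x` carries it over to `x + ℕ`.
Hence `0 < μ(x) ≤ 1/(12x)`.
-/

open MeasureTheory Set Filter

noncomputable def stirlingRatio (z : ℝ) : ℝ :=
  (z / Real.exp 1) ^ z * Real.sqrt (2 * Real.pi * z) / Real.Gamma (z + 1)

open Real Topology

noncomputable def logStirlingApprox (x : ℝ) : ℝ :=
  x * log x - x + log (2 * π * x) / 2

noncomputable def binet (x : ℝ) : ℝ :=
  log (Gamma (x + 1)) - logStirlingApprox x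

lemma stirlingRatio_eq_exp_neg_binet {x : ℝ} (hx : 0 < x) :
    stirlingRatio x = exp (-binet x) := by
  have hΓ : 0 < Gamma (x + 1) := Gamma_pos_of_pos (by linarith)
  have hpos : 0 < stirlingRatio x := by unfold stirlingRatio; positivity
  rw [← exp_log hpos, stirlingRatio, log_div (by positivity) hΓ.ne',
    log_mul (by positivity) (by positivity), log_rpow (by positivity), log_sqrt (by positivity),
    log_div hx.ne' (exp_pos 1).ne', log_exp, binet, logStirlingApprox]
  ring_nf

lemma binet_sub_binet_add_one {x : ℝ} (hx : 0 < x) :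
    binet x - binet (x + 1) = (x + 1 / 2) * log (1 + x⁻¹) - 1 := by
  have hx1 : 0 < x + 1 := by linarith
  have hlog : log (1 + x⁻¹) = log (x + 1) - log x := by
    rw [← log_div hx1.ne' hx.ne']
    congr 1
    field_simp
  rw [hlog, binet, binet, logStirlingApprox, logStirlingApprox, Gamma_add_one hx1.ne',
    log_mul hx1.ne' (Gamma_pos_of_pos hx1).ne', log_mul (by positivity) hx.ne',
    log_mul (by positivity) hx1.ne']
  ring

lemma hasSum_binet_sub_binet_add_one {x : ℝ} (hx : 0 < x) :
    HasSum (fun k : ℕ => 1 / (2 * ((k + 1 : ℕ) : ℝ) + 1) * ((1 / (2 * x + 1)) ^ 2) ^ (k + 1))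
      (binet x - binet (x + 1)) := by
  let f (k : ℕ) : ℝ := 1 / (2 * k + 1) * ((1 / (2 * x + 1)) ^ 2) ^ k
  change HasSum (fun k => f (k + 1)) _
  rw [hasSum_nat_add_iff 1, binet_sub_binet_add_one hx]
  convert! (hasSum_log_one_add_inv hx).mul_left (x + 1 / 2) using 1
  · ext k
    simp only [f]
    rw [← pow_mul, pow_succ]
    field_simp
  · simp [f]

lemma binet_add_one_lt_binet {x : ℝ} (hx : 0 < x) : binet (x + 1) < binet x := by
  have hfirst := le_hasSum (hasSum_binet_sub_binet_add_one hx) 0 fun _ _ => by positivity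
  exact sub_pos.1 (hfirst.trans_lt' (by positivity))

lemma binet_sub_binet_add_one_le {x : ℝ} (hx : 0 < x) :
    binet x - binet (x + 1) ≤ 1 / (12 * x) - 1 / (12 * (x + 1)) := by
  set r := (1 / (2 * x + 1)) ^ 2 with hr
  have hr0 : 0 ≤ r := by positivity
  have hr1 : r < 1 := by
    rw [hr, div_pow, one_pow, div_lt_one (by positivity)]
    nlinarith
  have hgeom : HasSum (fun k : ℕ => r ^ (k + 1) / 3) (r / (3 * (1 - r))) := by
    convert! ((hasSum_geometric_of_lt_one hr0 hr1).mul_left r).div_const 3 using 1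
    · ext k; ring
    · field_simp
  have hval : r / (3 * (1 - r)) = 1 / (12 * x) - 1 / (12 * (x + 1)) := by
    have h1r : 1 - r = 4 * x * (x + 1) / (2 * x + 1) ^ 2 := by
      rw [hr]; field_simp; ring
    rw [h1r, hr]
    field_simp
    ring
  rw [← hval]
  refine hasSum_le (fun k => ?_) (hasSum_binet_sub_binet_add_one hx) hgeom
  rw [div_mul_eq_mul_div, one_mul,
    div_le_div_iff_of_pos_left (by positivity) (by positivity) (by norm_num)]
  push_cast
  linarith [(k.cast_nonneg : (0 : ℝ) ≤ k)]

lemma binet_natCast {n : ℕ} (hn : n ≠ 0) :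
    binet n = log (Stirling.stirlingSeq n) - log √π := by
  have hn' : (0 : ℝ) < n := by positivity
  rw [binet, logStirlingApprox, Gamma_nat_eq_factorial, Stirling.log_stirlingSeq_formula,
    log_sqrt pi_pos.le, log_div hn'.ne' (exp_pos 1).ne', log_exp, log_mul (by positivity) hn'.ne',
    log_mul (by positivity) hn'.ne', log_mul two_ne_zero pi_pos.ne']
  ring

lemma tendsto_binet_natCast : Tendsto (fun n : ℕ => binet n) atTop (𝓝 0) := by
  have h := (Stirling.tendsto_stirlingSeq_sqrt_pi.log (by positivity)).sub_const (log √π)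
  rw [sub_self] at h
  refine h.congr' ?_
  filter_upwards [eventually_ne_atTop 0] with n hn
  exact (binet_natCast hn).symm

lemma tendsto_log_Gamma_add_natCast_sub {x : ℝ} (hx : 0 < x) :
    Tendsto (fun n : ℕ => log (Gamma (x + n + 1)) - log (Gamma (n + 1)) - x * log n)
      atTop (𝓝 0) := by
  have hfeq : ∀ {y : ℝ}, 0 < y → log (Gamma (y + 1)) = log (Gamma y) + log y := fun hy => by
    rw [Gamma_add_one hy.ne', log_mul hy.ne' (Gamma_pos_of_pos hy).ne', add_comm]
  have h := (tendsto_const_nhds (x := log (Gamma x))).sub (BohrMollerup.tendsto_log_gamma hx)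
  rw [sub_self] at h
  refine h.congr fun n => ?_
  have hshift := BohrMollerup.f_add_nat_eq (f := log ∘ Gamma) hfeq hx (n + 1)
  simp only [Function.comp_apply] at hshift
  push_cast at hshift
  rw [BohrMollerup.logGammaSeq, add_assoc, hshift, Gamma_nat_eq_factorial]
  ring

lemma tendsto_logStirlingApprox_add_sub (x : ℝ) :
    Tendsto (fun t => logStirlingApprox (t + x) - logStirlingApprox t - x * log t)
      atTop (𝓝 0) := by
  have h := ((tendsto_mul_log_one_add_div_atTop x).sub_const x).add
    ((tendsto_log_comp_add_sub_log x).const_mul (x + 1 / 2))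
  rw [sub_self, mul_zero, add_zero] at h
  refine h.congr' ?_
  filter_upwards [eventually_gt_atTop 0, eventually_gt_atTop (-x)] with t ht htx
  have htx' : 0 < t + x := by linarith
  have hlog : log (1 + x / t) = log (t + x) - log t := by
    rw [← log_div htx'.ne' ht.ne']
    congr 1
    field_simp
  rw [hlog, logStirlingApprox, logStirlingApprox, log_mul (by positivity) htx'.ne',
    log_mul (by positivity) ht.ne']
  ring

lemma tendsto_binet_add_natCast {x : ℝ} (hx : 0 < x) :
    Tendsto (fun n : ℕ => binet (x + n)) atTop (𝓝 0) := by
  have h := ((tendsto_log_Gamma_add_natCast_sub hx).sub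
    ((tendsto_logStirlingApprox_add_sub x).comp tendsto_natCast_atTop_atTop)).add
    tendsto_binet_natCast
  rw [sub_self, zero_add] at h
  refine h.congr fun n => ?_
  simp only [Function.comp_apply, binet, add_comm (n : ℝ) x]
  ring

lemma binet_pos {x : ℝ} (hx : 0 < x) : 0 < binet x := by
  have hanti : Antitone fun n : ℕ => binet (x + n) := by
    refine antitone_nat_of_succ_le fun n => ?_
    have := binet_add_one_lt_binet (x := x + n) (by positivity)
    push_cast
    rw [← add_assoc]
    exact this.le
  have h := hanti.le_of_tendsto (tendsto_binet_add_natCast hx) 1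
  push_cast at h
  linarith [binet_add_one_lt_binet hx]

lemma binet_le_one_div {x : ℝ} (hx : 0 < x) : binet x ≤ 1 / (12 * x) := by
  have hmono : Monotone fun n : ℕ => binet (x + n) - 1 / (12 * (x + n)) := by
    refine monotone_nat_of_le_succ fun n => ?_
    have := binet_sub_binet_add_one_le (x := x + n) (by positivity)
    push_cast
    rw [← add_assoc]
    linarith
  have hlim : Tendsto (fun n : ℕ => binet (x + n) - 1 / (12 * (x + n))) atTop (𝓝 0) := by
    have hx_add : Tendsto (fun n : ℕ => 12 * (x + n)) atTop atTop :=
      (tendsto_atTop_add_const_left _ x tendsto_natCast_atTop_atTop).const_mul_atTop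
        (by norm_num)
    have h := (tendsto_binet_add_natCast hx).sub
      ((tendsto_const_nhds (x := (1 : ℝ))).div_atTop hx_add)
    rwa [sub_zero] at h
  have h := hmono.ge_of_tendsto hlim 0
  simp only [Nat.cast_zero, add_zero] at h
  linarith

lemma tendsto_binet_atTop : Tendsto binet atTop (𝓝 0) := by
  have hdecay : Tendsto (fun x : ℝ => 1 / (12 * x)) atTop (𝓝 0) :=
    tendsto_const_nhds.div_atTop (tendsto_id.const_mul_atTop (by norm_num))
  refine tendsto_of_tendsto_of_tendsto_of_le_of_le' tendsto_const_nhds hdecay ?_ ?_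
  · filter_upwards [eventually_gt_atTop 0] with x hx using (binet_pos hx).le
  · filter_upwards [eventually_gt_atTop 0] with x hx using binet_le_one_div hx

theorem stirlingRatio_lt_one_tendsto_one :
    (∀ z > (0:ℝ), 0 < stirlingRatio z ∧ stirlingRatio z < 1) ∧
      Tendsto stirlingRatio atTop (nhds 1) := by
  refine ⟨fun z hz => ?_, ?_⟩
  · rw [stirlingRatio_eq_exp_neg_binet hz]
    exact ⟨exp_pos _, exp_lt_one_iff.2 (neg_lt_zero.2 (binet_pos hz))⟩
  · have h := tendsto_binet_atTop.neg.rexp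
    rw [neg_zero, exp_zero] at h
    refine h.congr' ?_
    filter_upwards [eventually_gt_atTop 0] with z hz
    exact (stirlingRatio_eq_exp_neg_binet hz).symm
end

section
/- There exist constants C > 0 and b₀ ∈ (0,1) such that for all b ∈ (0, b₀) and all t ∈ [1/2, 1-b], the quantity A_b(t) = ∫₀¹ K_{t,b}(x)² dx satisfies A_b(t) ≥ C b^{-1/2} / √(t(1-t)). -/
open MeasureTheory Set

noncomputable def betaFn (a c : ℝ) : ℝ := ∫ x in (0:ℝ)..1, x ^ (a - 1) * (1 - x) ^ (c - 1)

noncomputable def betaKernel (t b x : ℝ) : ℝ :=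
  x ^ (t / b) * (1 - x) ^ ((1 - t) / b) / betaFn (t / b + 1) ((1 - t) / b + 1)

/-!
With `a = t / b` and `c = (1 - t) / b`, the kernel `K_{t,b}` is the Beta(a + 1, c + 1)
density. Its moments follow from `x · x^a (1 - x)^c = x^(a+1) (1 - x)^c` and the recurrence
`B(u + 1, v) = u / (u + v) · B(u, v)`, giving the variance
`b (t + b)(1 - t + b) / ((1 + 2b)² (1 + 3b))`, which is at most `s² = 4 b t (1 - t)` once
`b ≤ min t (1 - t)`. By Chebyshev, at least `3/4` of the mass of `K_{t,b}` lies in a window of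
length at most `4 s`, and Cauchy–Schwarz on that window gives `∫ K² ≥ (3/4)² / (4 s) = 9 / (64 s)`.
-/

lemma ofReal_betaFn (u v : ℝ) : (betaFn u v : ℂ) = Complex.betaIntegral u v := by
  rw [betaFn, Complex.betaIntegral, ← intervalIntegral.integral_ofReal]
  refine intervalIntegral.integral_congr fun x hx => ?_
  rw [uIcc_of_le zero_le_one] at hx
  push_cast
  rw [Complex.ofReal_cpow hx.1, Complex.ofReal_cpow (sub_nonneg.2 hx.2)]
  push_cast
  ring

lemma betaFn_eq_beta {u v : ℝ} (hu : 0 < u) (hv : 0 < v) :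
    betaFn u v = ProbabilityTheory.beta u v := by
  rw [ProbabilityTheory.beta_eq_betaIntegralReal u v hu hv, ← ofReal_betaFn, Complex.ofReal_re]

lemma betaFn_pos {u v : ℝ} (hu : 0 < u) (hv : 0 < v) : 0 < betaFn u v :=
  betaFn_eq_beta hu hv ▸ ProbabilityTheory.beta_pos hu hv

lemma betaFn_add_one_left {u v : ℝ} (hu : 0 < u) (hv : 0 < v) :
    betaFn (u + 1) v = u / (u + v) * betaFn u v := by
  rw [betaFn_eq_beta (by linarith) hv, betaFn_eq_beta hu hv, ProbabilityTheory.beta,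
    ProbabilityTheory.beta, Real.Gamma_add_one hu.ne', add_right_comm,
    Real.Gamma_add_one (by positivity)]
  have : Real.Gamma (u + v) ≠ 0 := (Real.Gamma_pos_of_pos (by positivity)).ne'
  field_simp

/-- The density of the Beta(a + 1, c + 1) distribution on `[0, 1]`. -/
noncomputable def betaDensity (a c x : ℝ) : ℝ :=
  x ^ a * (1 - x) ^ c / betaFn (a + 1) (c + 1)

lemma betaKernel_eq_betaDensity (t b : ℝ) :
    betaKernel t b = betaDensity (t / b) ((1 - t) / b) := rfl

section betaDensity

variable {a c : ℝ}

lemma continuous_betaDensity (ha : 0 ≤ a) (hc : 0 ≤ c) : Continuous (betaDensity a c) :=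
  (((Real.continuous_rpow_const ha).mul
    ((Real.continuous_rpow_const hc).comp (continuous_sub_left 1)))).div_const _

lemma betaDensity_nonneg (ha : -1 < a) (hc : -1 < c) {x : ℝ} (hx : x ∈ Icc (0:ℝ) 1) :
    0 ≤ betaDensity a c x :=
  div_nonneg (mul_nonneg (Real.rpow_nonneg hx.1 a) (Real.rpow_nonneg (sub_nonneg.2 hx.2) c))
    (betaFn_pos (by linarith) (by linarith)).le

lemma integral_betaDensity (ha : -1 < a) (hc : -1 < c) :
    ∫ x in (0:ℝ)..1, betaDensity a c x = 1 := by
  have hN := betaFn_pos (show 0 < a + 1 by linarith) (show 0 < c + 1 by linarith)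
  simp only [betaDensity, intervalIntegral.integral_div]
  rw [div_eq_one_iff_eq hN.ne']
  simp only [betaFn, add_sub_cancel_right]

lemma mul_betaDensity (ha : -1 < a) (hc : -1 < c) {x : ℝ} (hx : 0 ≤ x) :
    x * betaDensity a c x = (a + 1) / (a + c + 2) * betaDensity (a + 1) c x := by
  have hN := betaFn_pos (show 0 < a + 1 by linarith) (show 0 < c + 1 by linarith)
  rw [betaDensity, betaDensity, betaFn_add_one_left (u := a + 1) (by linarith) (by linarith),
    Real.rpow_add_one' hx (by linarith)]
  have : a + 1 + (c + 1) = a + c + 2 := by ring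
  rw [this]
  have : a + c + 2 ≠ 0 := by linarith
  have : a + 1 ≠ 0 := by linarith
  field_simp

lemma integral_mul_betaDensity (ha : -1 < a) (hc : -1 < c) :
    ∫ x in (0:ℝ)..1, x * betaDensity a c x = (a + 1) / (a + c + 2) := by
  rw [intervalIntegral.integral_congr
    (g := fun x => (a + 1) / (a + c + 2) * betaDensity (a + 1) c x)
    fun x hx => mul_betaDensity ha hc (uIcc_of_le (zero_le_one' ℝ) ▸ hx).1,
    intervalIntegral.integral_const_mul, integral_betaDensity (by linarith) hc, mul_one]

lemma integral_sq_sub_mul_betaDensity (ha : 0 ≤ a) (hc : 0 ≤ c) :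
    ∫ x in (0:ℝ)..1, (x - (a + 1) / (a + c + 2)) ^ 2 * betaDensity a c x =
      (a + 1) * (c + 1) / ((a + c + 2) ^ 2 * (a + c + 3)) := by
  set μ := (a + 1) / (a + c + 2) with hμ
  set p := betaDensity a c
  have hp : Continuous p := continuous_betaDensity ha hc
  have hm1 : ∫ x in (0:ℝ)..1, x * p x = μ :=
    integral_mul_betaDensity (by linarith) (by linarith)
  have hm2 : ∫ x in (0:ℝ)..1, x * (x * p x) = μ * ((a + 2) / (a + c + 3)) := by
    rw [intervalIntegral.integral_congr (g := fun x => μ * (x * betaDensity (a + 1) c x))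
      fun x hx => by
        rw [mul_betaDensity (by linarith) (by linarith) (uIcc_of_le (zero_le_one' ℝ) ▸ hx).1]
        ring,
      intervalIntegral.integral_const_mul, integral_mul_betaDensity (by linarith) (by linarith)]
    ring
  have hm0 : ∫ x in (0:ℝ)..1, p x = 1 := integral_betaDensity (by linarith) (by linarith)
  have hexpand : ∀ x, (x - μ) ^ 2 * p x = x * (x * p x) - 2 * μ * (x * p x) + μ ^ 2 * p x :=
    fun x => by ring
  have hi : ∀ f : ℝ → ℝ, Continuous f → IntervalIntegrable f volume 0 1 :=
    fun f hf => hf.intervalIntegrable 0 1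
  simp_rw [hexpand]
  rw [intervalIntegral.integral_add (hi _ (by fun_prop)) (hi _ (by fun_prop)),
    intervalIntegral.integral_sub (hi _ (by fun_prop)) (hi _ (by fun_prop)),
    intervalIntegral.integral_const_mul, intervalIntegral.integral_const_mul, hm0, hm1, hm2]
  have : a + c + 2 ≠ 0 := by linarith
  have : a + c + 3 ≠ 0 := by linarith
  rw [hμ]
  field_simp
  ring

end betaDensity

lemma max_zero_sub_le_min_one_add {μ r : ℝ} (hμ : μ ∈ Icc (0:ℝ) 1) (hr : 0 ≤ r) :
    max 0 (μ - r) ≤ min 1 (μ + r) :=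
  max_le (le_min zero_le_one (by linarith [hμ.1])) (le_min (by linarith [hμ.2]) (by linarith))

section concentration

variable {f : ℝ → ℝ}

lemma sq_intervalIntegral_le (hf : Continuous f) {u v : ℝ} (huv : u ≤ v) :
    (∫ x in u..v, f x) ^ 2 ≤ (v - u) * ∫ x in u..v, f x ^ 2 := by
  rcases huv.eq_or_lt with rfl | huv
  · simp
  set S := ∫ x in u..v, f x
  have hL : 0 < v - u := sub_pos.2 huv
  have hamgm :
      ∫ x in u..v, 2 * S * f x ≤ ∫ x in u..v, ((v - u) * f x ^ 2 + S ^ 2 / (v - u)) := by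
    refine intervalIntegral.integral_mono_on huv.le
      (Continuous.intervalIntegrable (by fun_prop) _ _)
      (Continuous.intervalIntegrable (by fun_prop) _ _) fun x _ => ?_
    have : (v - u) * f x ^ 2 + S ^ 2 / (v - u) - 2 * S * f x =
        ((v - u) * f x - S) ^ 2 / (v - u) := by
      field_simp
      ring
    linarith [div_nonneg (sq_nonneg ((v - u) * f x - S)) hL.le]
  rw [intervalIntegral.integral_const_mul,
    intervalIntegral.integral_add (Continuous.intervalIntegrable (by fun_prop) _ _)
      intervalIntegrable_const,
    intervalIntegral.integral_const_mul, intervalIntegral.integral_const, smul_eq_mul,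
    mul_div_cancel₀ _ hL.ne'] at hamgm
  nlinarith

/-- Chebyshev's inequality, with the window `[μ - r, μ + r]` clipped to `[0, 1]`. -/
lemma integral_sub_le_integral_window (hf : Continuous f) (hf0 : ∀ x ∈ Icc (0:ℝ) 1, 0 ≤ f x)
    {μ r : ℝ} (hμ : μ ∈ Icc (0:ℝ) 1) (hr : 0 < r) :
    (∫ x in (0:ℝ)..1, f x) - (∫ x in (0:ℝ)..1, (x - μ) ^ 2 * f x) / r ^ 2 ≤
      ∫ x in max 0 (μ - r)..min 1 (μ + r), f x := by
  set u := max 0 (μ - r)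
  set v := min 1 (μ + r)
  have hu0 : 0 ≤ u := le_max_left _ _
  have hv1 : v ≤ 1 := min_le_left _ _
  have huv : u ≤ v := max_zero_sub_le_min_one_add hμ hr.le
  set w := fun x => (1 - ((x - μ) / r) ^ 2) * f x
  have hw : Continuous w := by fun_prop
  have hw_tail : ∀ x ∈ Icc (0:ℝ) 1, r ≤ |x - μ| → w x ≤ 0 := fun x hx hxμ => by
    refine mul_nonpos_of_nonpos_of_nonneg ?_ (hf0 x hx)
    rw [sub_nonpos, div_pow, ← sq_abs, le_div_iff₀ (by positivity), one_mul]
    exact pow_le_pow_left₀ hr.le hxμ 2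
  have hleft : ∫ x in (0:ℝ)..u, w x ≤ 0 := by
    simpa using intervalIntegral.integral_mono_on_of_le_Ioo hu0 (hw.intervalIntegrable _ _)
      (intervalIntegrable_const (c := (0:ℝ))) fun x hx =>
        hw_tail x ⟨hx.1.le, by linarith [hx.2]⟩ <| by
        have := (lt_max_iff.1 hx.2).resolve_left (not_lt.2 hx.1.le)
        rw [abs_sub_comm]
        exact (by linarith : r ≤ μ - x).trans (le_abs_self _)
  have hright : ∫ x in v..1, w x ≤ 0 := by
    simpa using intervalIntegral.integral_mono_on_of_le_Ioo hv1 (hw.intervalIntegrable _ _)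
      (intervalIntegrable_const (c := (0:ℝ))) fun x hx =>
        hw_tail x ⟨by linarith [hx.1], hx.2.le⟩ <| by
        have := (min_lt_iff.1 hx.1).resolve_left (not_lt.2 hx.2.le)
        exact (by linarith : r ≤ x - μ).trans (le_abs_self _)
  have hmid : ∫ x in u..v, w x ≤ ∫ x in u..v, f x :=
    intervalIntegral.integral_mono_on huv (hw.intervalIntegrable _ _) (hf.intervalIntegrable _ _)
      fun x hx => mul_le_of_le_one_left (hf0 x ⟨hu0.trans hx.1, hx.2.trans hv1⟩)
        (sub_le_self _ (sq_nonneg _))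
  have hsplit : ∫ x in (0:ℝ)..1, w x =
      (∫ x in (0:ℝ)..u, w x) + (∫ x in u..v, w x) + ∫ x in v..1, w x := by
    rw [intervalIntegral.integral_add_adjacent_intervals (hw.intervalIntegrable _ _)
      (hw.intervalIntegrable _ _), intervalIntegral.integral_add_adjacent_intervals
      (hw.intervalIntegrable _ _) (hw.intervalIntegrable _ _)]
  have hw_eq : ∫ x in (0:ℝ)..1, w x =
      (∫ x in (0:ℝ)..1, f x) - (∫ x in (0:ℝ)..1, (x - μ) ^ 2 * f x) / r ^ 2 := by
    have : ∀ x, w x = f x - (x - μ) ^ 2 * f x / r ^ 2 := fun x => by simp only [w]; ring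
    simp_rw [this]
    rw [intervalIntegral.integral_sub (hf.intervalIntegrable _ _)
      (Continuous.intervalIntegrable (by fun_prop) _ _),
      intervalIntegral.integral_div]
  linarith

theorem le_integral_sq_of_integral_sq_sub_mul_le (hf : Continuous f)
    (hf0 : ∀ x ∈ Icc (0:ℝ) 1, 0 ≤ f x) (hf1 : ∫ x in (0:ℝ)..1, f x = 1) {μ s : ℝ}
    (hμ : μ ∈ Icc (0:ℝ) 1) (hs : 0 < s)
    (hvar : ∫ x in (0:ℝ)..1, (x - μ) ^ 2 * f x ≤ s ^ 2) :
    9 / (64 * s) ≤ ∫ x in (0:ℝ)..1, f x ^ 2 := by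
  set u := max 0 (μ - 2 * s)
  set v := min 1 (μ + 2 * s)
  have hu0 : 0 ≤ u := le_max_left _ _
  have hv1 : v ≤ 1 := min_le_left _ _
  have huv : u ≤ v := max_zero_sub_le_min_one_add hμ (by positivity)
  have hwidth : v - u ≤ 4 * s := by
    linarith [le_max_right 0 (μ - 2 * s), min_le_right 1 (μ + 2 * s)]
  have hmass : 3 / 4 ≤ ∫ x in u..v, f x := by
    have h := integral_sub_le_integral_window hf hf0 hμ (by positivity : 0 < 2 * s)
    rw [hf1] at h
    have : (∫ x in (0:ℝ)..1, (x - μ) ^ 2 * f x) / (2 * s) ^ 2 ≤ 1 / 4 := by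
      rw [div_le_iff₀ (by positivity)]
      linarith
    linarith
  have hsub : ∫ x in u..v, f x ^ 2 ≤ ∫ x in (0:ℝ)..1, f x ^ 2 :=
    intervalIntegral.integral_mono_interval hu0 huv hv1
      (Filter.Eventually.of_forall fun x => sq_nonneg (f x))
      (Continuous.intervalIntegrable (by fun_prop) _ _)
  have hQ : 0 ≤ ∫ x in u..v, f x ^ 2 :=
    intervalIntegral.integral_nonneg huv fun x _ => sq_nonneg (f x)
  have key : 9 / 16 ≤ 4 * s * ∫ x in (0:ℝ)..1, f x ^ 2 := calc
    9 / 16 ≤ (∫ x in u..v, f x) ^ 2 := by nlinarith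
    _ ≤ (v - u) * ∫ x in u..v, f x ^ 2 := sq_intervalIntegral_le hf huv
    _ ≤ 4 * s * ∫ x in (0:ℝ)..1, f x ^ 2 :=
      mul_le_mul hwidth hsub hQ (by positivity)
  rw [div_le_iff₀ (by positivity)]
  linarith

end concentration

lemma integral_sq_sub_mul_betaKernel_le {t b : ℝ} (hb : 0 < b) (hbt : b ≤ t)
    (htb : t ≤ 1 - b) :
    ∫ x in (0:ℝ)..1, (x - (t + b) / (1 + 2 * b)) ^ 2 * betaKernel t b x ≤
      4 * (b * (t * (1 - t))) := by
  have : b ≠ 0 := hb.ne'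
  have : 1 + 2 * b ≠ 0 := by positivity
  have : 1 + 3 * b ≠ 0 := by positivity
  have hsum : t / b + (1 - t) / b = 1 / b := by rw [← add_div, add_sub_cancel]
  have hmean : (t / b + 1) / (t / b + (1 - t) / b + 2) = (t + b) / (1 + 2 * b) := by
    rw [hsum]
    field_simp
  have hvar : (t / b + 1) * ((1 - t) / b + 1) /
      ((t / b + (1 - t) / b + 2) ^ 2 * (t / b + (1 - t) / b + 3)) =
      b * ((t + b) * (1 - t + b)) / ((1 + 2 * b) ^ 2 * (1 + 3 * b)) := by
    rw [hsum]
    field_simp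
  rw [betaKernel_eq_betaDensity, ← hmean,
    integral_sq_sub_mul_betaDensity (div_nonneg (by linarith) hb.le)
      (div_nonneg (by linarith) hb.le), hvar,
    div_le_iff₀ (by positivity)]
  have htt : 0 ≤ t * (1 - t) := mul_nonneg (by linarith) (by linarith)
  have hfactor : (t + b) * (1 - t + b) ≤ 4 * (t * (1 - t)) := by nlinarith
  have hden : 1 ≤ (1 + 2 * b) ^ 2 * (1 + 3 * b) := by nlinarith
  calc b * ((t + b) * (1 - t + b)) ≤ 4 * (b * (t * (1 - t))) := by nlinarith
    _ ≤ 4 * (b * (t * (1 - t))) * ((1 + 2 * b) ^ 2 * (1 + 3 * b)) :=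
      le_mul_of_one_le_right (by positivity) hden

theorem A_lower_bound :
    ∃ C > (0:ℝ), ∃ b₀ ∈ Ioo (0:ℝ) 1, ∀ b ∈ Ioo (0:ℝ) b₀, ∀ t ∈ Icc (1/2 : ℝ) (1 - b),
      (∫ x in (0:ℝ)..1, (betaKernel t b x) ^ 2) ≥
        C * b ^ (-(1/2) : ℝ) / Real.sqrt (t * (1 - t)) := by
  refine ⟨9 / 128, by norm_num, 1 / 2, by norm_num, ?_⟩
  rintro b ⟨hb0, hb⟩ t ⟨ht, htb⟩
  have hbt : b ≤ t := by linarith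
  have ha : 0 ≤ t / b := div_nonneg (by linarith) hb0.le
  have hc : 0 ≤ (1 - t) / b := div_nonneg (by linarith) hb0.le
  have htt : 0 < t * (1 - t) := mul_pos (by linarith) (by linarith)
  set s := 2 * √(b * (t * (1 - t))) with hs_def
  have hs : 0 < s := by positivity
  have hmean : (t + b) / (1 + 2 * b) ∈ Icc (0:ℝ) 1 :=
    ⟨by positivity, (div_le_one (by positivity)).2 (by linarith)⟩
  have hvar :
      ∫ x in (0:ℝ)..1, (x - (t + b) / (1 + 2 * b)) ^ 2 * betaKernel t b x ≤ s ^ 2 := by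
    rw [hs_def, mul_pow, Real.sq_sqrt (by positivity)]
    linarith [integral_sq_sub_mul_betaKernel_le hb0 hbt htb]
  rw [betaKernel_eq_betaDensity] at hvar ⊢
  have hbound := le_integral_sq_of_integral_sq_sub_mul_le (continuous_betaDensity ha hc)
    (fun x hx => betaDensity_nonneg (by linarith) (by linarith) hx)
    (integral_betaDensity (by linarith) (by linarith)) hmean hs hvar
  have hC : 9 / 128 * b ^ (-(1/2) : ℝ) / √(t * (1 - t)) = 9 / (64 * s) := by
    rw [Real.rpow_neg hb0.le, ← Real.sqrt_eq_rpow, hs_def, Real.sqrt_mul hb0.le]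
    have : √b ≠ 0 := (Real.sqrt_pos.2 hb0).ne'
    have : √(t * (1 - t)) ≠ 0 := (Real.sqrt_pos.2 htt).ne'
    field_simp
    ring
  rw [ge_iff_le, hC]
  exact hbound
end

section
/- There exist constants C > 0 and b₀ ∈ (0,1) such that for all b ∈ (0, b₀) and all t ∈ (0,1), sup_{x ∈ [0,1]} K_{t,b}(x) ≤ C b^{-1/2} / √(t(1-t)). -/
open MeasureTheory Set

/-!
With `φ_t(x) = t log x + (1 - t) log (1 - x)`, the unnormalised kernel is `exp (φ_t(x) / b)`.
Gibbs' inequality puts its maximum `M` at `x = t`, and the bound `KL ≤ χ²`, in the form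
`φ_t(t) - φ_t(x) ≤ (x - t)² / (x (1 - x))`, keeps it above `e⁻² M` on a window of length
`√(b t (1 - t))` next to `t`. So the normaliser `B(t/b + 1, (1 - t)/b + 1)` is at least
`e⁻² M √(b t (1 - t))` and the kernel is at most `e² / √(b t (1 - t))`. The window lies to the
right of `t` when `t ≤ 1/2`; the case `t > 1/2` follows from the symmetry `x ↦ 1 - x`.
-/

open Real

theorem betaFn_comm (a c : ℝ) : betaFn a c = betaFn c a := by
  have h := intervalIntegral.integral_comp_sub_left
    (fun x : ℝ => x ^ (c - 1) * (1 - x) ^ (a - 1)) 1 (a := 0) (b := 1)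
  simp only [sub_sub_cancel, sub_zero, sub_self] at h
  rw [betaFn, betaFn, ← h]
  simp_rw [mul_comm]

theorem betaKernel_one_sub (t b x : ℝ) : betaKernel (1 - t) b (1 - x) = betaKernel t b x := by
  rw [betaKernel, betaKernel, sub_sub_cancel, sub_sub_cancel, betaFn_comm, mul_comm]

theorem betaFn_add_one (p q : ℝ) :
    betaFn (p + 1) (q + 1) = ∫ x in (0:ℝ)..1, x ^ p * (1 - x) ^ q := by
  simp only [betaFn, add_sub_cancel_right]

theorem continuous_rpow_mul_one_sub_rpow {p q : ℝ} (hp : 0 ≤ p) (hq : 0 ≤ q) :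
    Continuous fun x : ℝ => x ^ p * (1 - x) ^ q :=
  (continuous_rpow_const hp).mul
    ((continuous_rpow_const hq).comp (continuous_const.sub continuous_id))

theorem rpow_mul_one_sub_rpow_eq_exp_div {x : ℝ} (hx : x ∈ Ioo (0:ℝ) 1) (t b : ℝ) :
    x ^ (t / b) * (1 - x) ^ ((1 - t) / b) = exp ((t * log x + (1 - t) * log (1 - x)) / b) := by
  rw [rpow_def_of_pos hx.1, rpow_def_of_pos (sub_pos.2 hx.2), ← exp_add]
  ring_nf

variable {t b x : ℝ}

theorem mul_log_add_mul_log_le (ht : t ∈ Ioo (0:ℝ) 1) (hx : x ∈ Ioo (0:ℝ) 1) :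
    t * log x + (1 - t) * log (1 - x) ≤ t * log t + (1 - t) * log (1 - t) := by
  obtain ⟨ht0, ht1⟩ := ht
  obtain ⟨hx0, hx1⟩ := hx
  have h1t := sub_pos.2 ht1
  have h1x := sub_pos.2 hx1
  have h1 := log_le_sub_one_of_pos (div_pos hx0 ht0)
  have h2 := log_le_sub_one_of_pos (div_pos h1x h1t)
  rw [log_div hx0.ne' ht0.ne'] at h1
  rw [log_div h1x.ne' h1t.ne'] at h2
  have e1 : t * (x / t - 1) = x - t := by field_simp
  have e2 : (1 - t) * ((1 - x) / (1 - t) - 1) = t - x := by field_simp; ring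
  nlinarith [mul_le_mul_of_nonneg_left h1 ht0.le, mul_le_mul_of_nonneg_left h2 h1t.le]

theorem mul_log_add_mul_log_sub_le (ht : t ∈ Ioo (0:ℝ) 1) (hx : x ∈ Ioo (0:ℝ) 1) :
    t * log t + (1 - t) * log (1 - t) - (x - t) ^ 2 / (x * (1 - x))
      ≤ t * log x + (1 - t) * log (1 - x) := by
  obtain ⟨ht0, ht1⟩ := ht
  obtain ⟨hx0, hx1⟩ := hx
  have h1t := sub_pos.2 ht1
  have h1x := sub_pos.2 hx1
  have h1 := one_sub_inv_le_log_of_pos (div_pos hx0 ht0)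
  have h2 := one_sub_inv_le_log_of_pos (div_pos h1x h1t)
  rw [log_div hx0.ne' ht0.ne', inv_div] at h1
  rw [log_div h1x.ne' h1t.ne', inv_div] at h2
  have e : t * (1 - t / x) + (1 - t) * (1 - (1 - t) / (1 - x))
      = -((x - t) ^ 2 / (x * (1 - x))) := by
    field_simp
    ring
  nlinarith [mul_le_mul_of_nonneg_left h1 ht0.le, mul_le_mul_of_nonneg_left h2 h1t.le]

theorem rpow_mul_one_sub_rpow_le_mode (hb : 0 < b) (ht : t ∈ Ioo (0:ℝ) 1)
    (hx : x ∈ Icc (0:ℝ) 1) :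
    x ^ (t / b) * (1 - x) ^ ((1 - t) / b) ≤ t ^ (t / b) * (1 - t) ^ ((1 - t) / b) := by
  have h1t := sub_pos.2 ht.2
  have hmode : 0 ≤ t ^ (t / b) * (1 - t) ^ ((1 - t) / b) := by have := ht.1; positivity
  rcases hx.1.eq_or_lt with rfl | hx0
  · rwa [zero_rpow (div_pos ht.1 hb).ne', zero_mul]
  rcases hx.2.eq_or_lt with rfl | hx1
  · rwa [sub_self, zero_rpow (div_pos h1t hb).ne', mul_zero]
  rw [rpow_mul_one_sub_rpow_eq_exp_div ⟨hx0, hx1⟩, rpow_mul_one_sub_rpow_eq_exp_div ht,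
    exp_le_exp]
  exact div_le_div_of_nonneg_right (mul_log_add_mul_log_le ht ⟨hx0, hx1⟩) hb.le

theorem exp_neg_two_mul_mode_le (hb : 0 < b) (ht : t ∈ Ioo (0:ℝ) 1) (hx : x ∈ Ioo (0:ℝ) 1)
    (hsq : (x - t) ^ 2 ≤ 2 * b * (x * (1 - x))) :
    exp (-2) * (t ^ (t / b) * (1 - t) ^ ((1 - t) / b))
      ≤ x ^ (t / b) * (1 - x) ^ ((1 - t) / b) := by
  rw [rpow_mul_one_sub_rpow_eq_exp_div hx, rpow_mul_one_sub_rpow_eq_exp_div ht, ← exp_add,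
    exp_le_exp]
  have hchi : (x - t) ^ 2 / (x * (1 - x)) / b ≤ 2 := by
    rw [div_le_iff₀ hb, div_le_iff₀ (mul_pos hx.1 (sub_pos.2 hx.2))]; linarith
  calc -2 + (t * log t + (1 - t) * log (1 - t)) / b
      ≤ (t * log t + (1 - t) * log (1 - t) - (x - t) ^ 2 / (x * (1 - x))) / b := by
        rw [sub_div]; linarith
    _ ≤ _ := div_le_div_of_nonneg_right (mul_log_add_mul_log_sub_le ht hx) hb.le

theorem sq_sub_le_of_mem_window (hb0 : 0 ≤ b) (hb : b ≤ 1 / 4) (ht0 : 0 < t) (ht : t ≤ 1 / 2)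
    (hx : x ∈ Icc t (t + √(b * (t * (1 - t))))) :
    x ∈ Ioo (0:ℝ) 1 ∧ (x - t) ^ 2 ≤ 2 * b * (x * (1 - x)) := by
  have h1t : 1 / 2 ≤ 1 - t := by linarith
  have hbt : b * t ≤ 1 / 8 := by nlinarith
  have hw : √(b * (t * (1 - t))) ≤ (1 - t) / 2 := by
    rw [sqrt_le_iff]
    exact ⟨by linarith, by nlinarith⟩
  have hsq : (x - t) ^ 2 ≤ b * (t * (1 - t)) := by
    rw [← sq_sqrt (by positivity : 0 ≤ b * (t * (1 - t)))]
    exact pow_le_pow_left₀ (sub_nonneg.2 hx.1) (by linarith [hx.2]) 2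
  have h1x : 1 - t ≤ 2 * (1 - x) := by linarith [hx.2]
  refine ⟨⟨ht0.trans_le hx.1, by linarith⟩, hsq.trans ?_⟩
  have : t * (1 - t) ≤ x * (2 * (1 - x)) := mul_le_mul hx.1 h1x (by linarith) (ht0.le.trans hx.1)
  nlinarith [mul_le_mul_of_nonneg_left this hb0]

theorem sqrt_mul_mode_le_betaFn (hb : 0 < b) (hb4 : b ≤ 1 / 4) (ht0 : 0 < t) (ht : t ≤ 1 / 2) :
    √(b * (t * (1 - t))) * (exp (-2) * (t ^ (t / b) * (1 - t) ^ ((1 - t) / b)))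
      ≤ betaFn (t / b + 1) ((1 - t) / b + 1) := by
  set w := √(b * (t * (1 - t)))
  have ht1 : t ∈ Ioo (0:ℝ) 1 := ⟨ht0, by linarith⟩
  have hw : t ≤ t + w := le_add_of_nonneg_right (sqrt_nonneg _)
  have hf := continuous_rpow_mul_one_sub_rpow (div_pos ht0 hb).le (div_pos (sub_pos.2 ht1.2) hb).le
  have htw : t + w ≤ 1 := (sq_sub_le_of_mem_window hb.le hb4 ht0 ht ⟨hw, le_rfl⟩).1.2.le
  calc w * (exp (-2) * (t ^ (t / b) * (1 - t) ^ ((1 - t) / b)))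
      = ∫ _ in t..t + w, exp (-2) * (t ^ (t / b) * (1 - t) ^ ((1 - t) / b)) := by
        rw [intervalIntegral.integral_const, add_sub_cancel_left, smul_eq_mul]
    _ ≤ ∫ x in t..t + w, x ^ (t / b) * (1 - x) ^ ((1 - t) / b) :=
        intervalIntegral.integral_mono_on hw intervalIntegrable_const (hf.intervalIntegrable _ _)
          fun x hx =>
            have hwin := sq_sub_le_of_mem_window hb.le hb4 ht0 ht hx
            exp_neg_two_mul_mode_le hb ht1 hwin.1 hwin.2
    _ ≤ ∫ x in (0:ℝ)..1, x ^ (t / b) * (1 - x) ^ ((1 - t) / b) :=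
        intervalIntegral.integral_mono_interval ht0.le hw htw
          (ae_restrict_of_forall_mem measurableSet_Ioc fun x hx =>
            mul_nonneg (rpow_nonneg hx.1.le _) (rpow_nonneg (sub_nonneg.2 hx.2) _))
          (hf.intervalIntegrable _ _)
    _ = betaFn (t / b + 1) ((1 - t) / b + 1) := (betaFn_add_one _ _).symm

theorem betaKernel_le_of_le_half (hb : 0 < b) (hb4 : b ≤ 1 / 4) (ht0 : 0 < t) (ht : t ≤ 1 / 2)
    (hx : x ∈ Icc (0:ℝ) 1) : betaKernel t b x ≤ exp 2 / √(b * (t * (1 - t))) := by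
  have h1t : 0 < 1 - t := by linarith
  set M := t ^ (t / b) * (1 - t) ^ ((1 - t) / b)
  have hM : 0 < M := by positivity
  have hB := sqrt_mul_mode_le_betaFn hb hb4 ht0 ht
  have hB0 : 0 ≤ betaFn (t / b + 1) ((1 - t) / b + 1) := le_trans (by positivity) hB
  calc betaKernel t b x ≤ M / betaFn (t / b + 1) ((1 - t) / b + 1) :=
        div_le_div_of_nonneg_right (rpow_mul_one_sub_rpow_le_mode hb ⟨ht0, by linarith⟩ hx) hB0
    _ ≤ M / (√(b * (t * (1 - t))) * (exp (-2) * M)) :=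
        div_le_div_of_nonneg_left hM.le (by positivity) hB
    _ = exp 2 / √(b * (t * (1 - t))) := by
        rw [exp_neg]
        field_simp

theorem betaKernel_le (hb : 0 < b) (hb4 : b ≤ 1 / 4) (ht : t ∈ Ioo (0:ℝ) 1)
    (hx : x ∈ Icc (0:ℝ) 1) : betaKernel t b x ≤ exp 2 / √(b * (t * (1 - t))) := by
  rcases le_or_gt t (1 / 2) with hle | hgt
  · exact betaKernel_le_of_le_half hb hb4 ht.1 hle hx
  · have h := betaKernel_le_of_le_half hb hb4 (sub_pos.2 ht.2) (by linarith)
      (x := 1 - x) ⟨sub_nonneg.2 hx.2, by linarith [hx.1]⟩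
    rwa [betaKernel_one_sub, sub_sub_cancel, mul_comm (1 - t)] at h

theorem betaKernel_sup_bound :
    ∃ C > (0:ℝ), ∃ b₀ ∈ Ioo (0:ℝ) 1, ∀ b ∈ Ioo (0:ℝ) b₀, ∀ t ∈ Ioo (0:ℝ) 1,
      ∀ x ∈ Icc (0:ℝ) 1,
        betaKernel t b x ≤ C * b ^ (-(1/2) : ℝ) / Real.sqrt (t * (1 - t)) := by
  refine ⟨exp 2, exp_pos 2, 1 / 4, by norm_num, fun b hb t ht x hx => ?_⟩
  have hsqrt : b ^ (-(1/2) : ℝ) = (√b)⁻¹ := by rw [rpow_neg hb.1.le, sqrt_eq_rpow]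
  rw [hsqrt, ← div_eq_mul_inv, div_div, ← sqrt_mul hb.1.le]
  exact betaKernel_le hb.1 hb.2.le ht hx
end

section
/- There exist constants C > 0 and b₀ ∈ (0,1) such that for all b ∈ (0,b₀) and all t ∈ [1/4, 3/4], K_{t,b}(t) ≥ C b^{-1/2}. -/
/-!
The Beta integral `B(t/b+1, (1-t)/b+1) = ∫₀¹ x^{t/b} (1-x)^{(1-t)/b} dx` is controlled by its
integrand at the mode `x = t`: the Pinsker-type inequality
`t log x + (1-t) log (1-x) + (x-t)² ≤ t log t + (1-t) log (1-t)` gives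
`x^{t/b} (1-x)^{(1-t)/b} ≤ t^{t/b} (1-t)^{(1-t)/b} exp (-(x-t)²/b)`, and integrating the Gaussian
over the whole line yields `B ≤ t^{t/b} (1-t)^{(1-t)/b} √(π b)`.
Hence `K_{t,b}(t) ≥ (π b)^{-1/2}` for every `t ∈ (0,1)` and `b > 0`.
-/

open MeasureTheory Set

open Real

theorem sq_sub_le_sum_sq_sqrt_sub {x t : ℝ} (hx : x ∈ Icc (0:ℝ) 1)
    (ht : t ∈ Icc (0:ℝ) 1) :
    (x - t) ^ 2 ≤ (√x - √t) ^ 2 + (√(1 - x) - √(1 - t)) ^ 2 := by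
  obtain ⟨hx0, hx1⟩ := hx
  obtain ⟨ht0, ht1⟩ := ht
  have hsx := sq_sqrt hx0
  have hst := sq_sqrt ht0
  have hsx' := sq_sqrt (sub_nonneg.2 hx1)
  have hst' := sq_sqrt (sub_nonneg.2 ht1)
  set u := √x - √t
  set v := √(1 - x) - √(1 - t)
  have hprod : 2 * (x - t) = u * (√x + √t) - v * (√(1 - x) + √(1 - t)) := by
    linear_combination -hsx + hst + hsx' - hst'
  have hsum : (√x + √t) ^ 2 + (√(1 - x) + √(1 - t)) ^ 2 ≤ 4 := by
    nlinarith [sq_nonneg u, sq_nonneg v]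
  have hcs : (2 * (x - t)) ^ 2
      ≤ (u ^ 2 + v ^ 2) * ((√x + √t) ^ 2 + (√(1 - x) + √(1 - t)) ^ 2) := by
    -- Lagrange's identity `(uA - vB)² + (uB + vA)² = (u² + v²)(A² + B²)`
    rw [hprod]
    nlinarith [sq_nonneg (u * (√(1 - x) + √(1 - t)) + v * (√x + √t))]
  nlinarith [mul_le_mul_of_nonneg_left hsum (add_nonneg (sq_nonneg u) (sq_nonneg v))]

theorem log_le_two_mul_sqrt_sub_one {x : ℝ} (hx : 0 < x) : log x ≤ 2 * (√x - 1) := by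
  have := log_le_sub_one_of_pos (sqrt_pos.2 hx)
  rw [log_sqrt hx.le] at this
  linarith

theorem mul_log_sub_log_le {x t : ℝ} (hx : 0 < x) (ht : 0 < t) :
    t * (log x - log t) ≤ 2 * (√t * √x - t) := by
  have h := mul_le_mul_of_nonneg_left (log_le_two_mul_sqrt_sub_one (div_pos hx ht)) ht.le
  have hroot : t * (√(x / t)) = √t * √x := by
    rw [sqrt_div' _ ht.le]
    nth_rw 1 [← mul_self_sqrt ht.le]
    field_simp [(sqrt_pos.2 ht).ne']
  rw [log_div hx.ne' ht.ne'] at h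
  linarith

-- Both logarithmic terms are bounded via `log y ≤ 2 (√y - 1)`, so the Bernoulli
-- Kullback–Leibler divergence dominates the squared Hellinger distance, which in turn
-- dominates `(x - t)²`.
theorem mul_log_add_mul_log_one_sub_add_sq_le {x t : ℝ} (hx : x ∈ Ioo (0:ℝ) 1)
    (ht : t ∈ Ioo (0:ℝ) 1) :
    t * log x + (1 - t) * log (1 - x) + (x - t) ^ 2 ≤ t * log t + (1 - t) * log (1 - t) := by
  obtain ⟨hx0, hx1⟩ := hx
  obtain ⟨ht0, ht1⟩ := ht
  have hlog := mul_log_sub_log_le hx0 ht0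
  have hlog' := mul_log_sub_log_le (sub_pos.2 hx1) (sub_pos.2 ht1)
  have hsq := sq_sub_le_sum_sq_sqrt_sub ⟨hx0.le, hx1.le⟩ ⟨ht0.le, ht1.le⟩
  nlinarith [sq_sqrt hx0.le, sq_sqrt ht0.le, sq_sqrt (sub_pos.2 hx1).le,
    sq_sqrt (sub_pos.2 ht1).le]

theorem rpow_mul_one_sub_rpow_le_mul_exp {x t b : ℝ} (hx : x ∈ Ioo (0:ℝ) 1)
    (ht : t ∈ Ioo (0:ℝ) 1) (hb : 0 < b) :
    x ^ (t / b) * (1 - x) ^ ((1 - t) / b)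
      ≤ t ^ (t / b) * (1 - t) ^ ((1 - t) / b) * exp (-(x - t) ^ 2 / b) := by
  have hlog := div_le_div_of_nonneg_right (mul_log_add_mul_log_one_sub_add_sq_le hx ht) hb.le
  rw [rpow_def_of_pos hx.1, rpow_def_of_pos (sub_pos.2 hx.2), rpow_def_of_pos ht.1,
    rpow_def_of_pos (sub_pos.2 ht.2), ← exp_add, ← exp_add, ← exp_add, exp_le_exp]
  linear_combination hlog

theorem intervalIntegral_exp_neg_sq_div_le {a c t b : ℝ} (hac : a ≤ c) (hb : 0 < b) :
    ∫ x in a..c, exp (-(x - t) ^ 2 / b) ≤ √(π * b) := by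
  have hrw : (fun x => exp (-(x - t) ^ 2 / b)) = fun x => exp (-b⁻¹ * (x - t) ^ 2) := by
    ext x; ring_nf
  have hint : Integrable (fun x => exp (-b⁻¹ * (x - t) ^ 2)) :=
    (integrable_exp_neg_mul_sq (inv_pos.2 hb)).comp_sub_right t
  calc ∫ x in a..c, exp (-(x - t) ^ 2 / b)
      ≤ ∫ x, exp (-b⁻¹ * (x - t) ^ 2) := by
        rw [hrw, intervalIntegral.integral_of_le hac]
        exact setIntegral_le_integral hint (.of_forall fun _ => (exp_pos _).le)
    _ = √(π * b) := by
        rw [integral_sub_right_eq_self (fun y => exp (-b⁻¹ * y ^ 2)), integral_gaussian,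
          div_inv_eq_mul]

theorem betaFn_add_one_pos {p q : ℝ} (hp : 0 ≤ p) (hq : 0 ≤ q) :
    0 < betaFn (p + 1) (q + 1) := by
  simp only [betaFn, add_sub_cancel_right]
  refine intervalIntegral.intervalIntegral_pos_of_pos_on
    ((continuous_rpow_mul_one_sub_rpow hp hq).intervalIntegrable 0 1) (fun x hx => ?_) one_pos
  have := sub_pos.2 hx.2
  have := hx.1
  positivity

theorem betaFn_le_mul_sqrt {t b : ℝ} (ht : t ∈ Ioo (0:ℝ) 1) (hb : 0 < b) :
    betaFn (t / b + 1) ((1 - t) / b + 1)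
      ≤ t ^ (t / b) * (1 - t) ^ ((1 - t) / b) * √(π * b) := by
  have hp : 0 ≤ t / b := div_nonneg ht.1.le hb.le
  have hq : 0 ≤ (1 - t) / b := div_nonneg (sub_nonneg.2 ht.2.le) hb.le
  have hM : 0 ≤ t ^ (t / b) * (1 - t) ^ ((1 - t) / b) :=
    mul_nonneg (rpow_nonneg ht.1.le _) (rpow_nonneg (sub_nonneg.2 ht.2.le) _)
  simp only [betaFn, add_sub_cancel_right]
  calc ∫ x in (0:ℝ)..1, x ^ (t / b) * (1 - x) ^ ((1 - t) / b)
      ≤ ∫ x in (0:ℝ)..1, t ^ (t / b) * (1 - t) ^ ((1 - t) / b) * exp (-(x - t) ^ 2 / b) :=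
        intervalIntegral.integral_mono_on_of_le_Ioo zero_le_one
          ((continuous_rpow_mul_one_sub_rpow hp hq).intervalIntegrable 0 1)
          (Continuous.intervalIntegrable (by fun_prop) 0 1)
          fun x hx => rpow_mul_one_sub_rpow_le_mul_exp hx ht hb
    _ = t ^ (t / b) * (1 - t) ^ ((1 - t) / b) * ∫ x in (0:ℝ)..1, exp (-(x - t) ^ 2 / b) :=
        intervalIntegral.integral_const_mul _ _
    _ ≤ t ^ (t / b) * (1 - t) ^ ((1 - t) / b) * √(π * b) :=
        mul_le_mul_of_nonneg_left (intervalIntegral_exp_neg_sq_div_le zero_le_one hb) hM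

theorem inv_sqrt_pi_mul_le_betaKernel_self {t b : ℝ} (ht : t ∈ Ioo (0:ℝ) 1) (hb : 0 < b) :
    (√(π * b))⁻¹ ≤ betaKernel t b t := by
  have hB :=
    betaFn_add_one_pos (div_nonneg ht.1.le hb.le) (div_nonneg (sub_nonneg.2 ht.2.le) hb.le)
  rw [betaKernel, inv_eq_one_div, div_le_div_iff₀ (by positivity) hB, one_mul]
  exact betaFn_le_mul_sqrt ht hb

theorem betaKernel_mode_lower_bound :
    ∃ C > (0:ℝ), ∃ b₀ ∈ Ioo (0:ℝ) 1, ∀ b ∈ Ioo (0:ℝ) b₀, ∀ t ∈ Icc (1/4 : ℝ) (3/4),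
      betaKernel t b t ≥ C * b ^ (-(1/2) : ℝ) := by
  refine ⟨(√π)⁻¹, by positivity, 1/2, ⟨by norm_num, by norm_num⟩, fun b hb t ht => ?_⟩
  have ht' : t ∈ Ioo (0:ℝ) 1 := ⟨by linarith [ht.1], by linarith [ht.2]⟩
  calc (√π)⁻¹ * b ^ (-(1/2) : ℝ) = (√(π * b))⁻¹ := by
        rw [rpow_neg hb.1.le, ← sqrt_eq_rpow, sqrt_mul pi_pos.le, mul_inv]
    _ ≤ betaKernel t b t := inv_sqrt_pi_mul_le_betaKernel_self ht' hb.1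
end

section
/- Let β > 0, L > 0, m = ⌈β⌉ - 1 if β is not an integer and m = β - 1 if β is an integer (i.e., m is the largest integer strictly less than β), and let Σ(β,L) be the set of probability densities f on [0,1] that are m times differentiable with |f^{(m)}(x) - f^{(m)}(y)| ≤ L|x-y|^{β-m} for all x,y ∈ [0,1]. Then sup_{f ∈ Σ(β,L)} ‖f‖_∞ < ∞. -/
/-!
Since `β - m ∈ (0, 1]`, the Hölder condition bounds the oscillation of `f⁽ᵐ⁾` on `[0, 1]` by `L`,
so by Taylor's theorem with Lagrange remainder `f` stays within `L` of its Taylor polynomial `P`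
of degree `m` at `0`. As `f ≥ 0` and `∫ f = 1`, this gives `∫ |P| ≤ 1 + L`. On the
finite-dimensional space of polynomials of degree `≤ m` the sup norm on `[0, 1]` is dominated by
the `L¹` norm, so `|f| ≤ |P| + L` is bounded by a constant depending only on `m` and `L`.
-/

open MeasureTheory Set

open scoped Nat

theorem exists_norm_le_mul_of_continuous_of_pos {E : Type*} [NormedAddCommGroup E]
    [NormedSpace ℝ E] [FiniteDimensional ℝ E] {N : E → ℝ} (hN : Continuous N)
    (hsmul : ∀ (c : ℝ) (a : E), N (c • a) = |c| * N a) (hpos : ∀ a ≠ 0, 0 < N a) :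
    ∃ C ≥ 0, ∀ a, ‖a‖ ≤ C * N a := by
  obtain ⟨C, hC⟩ := (isCompact_sphere (0 : E) 1).exists_bound_of_continuousOn
    (hN.continuousOn.inv₀ fun a ha => (hpos a (ne_zero_of_mem_sphere one_ne_zero ⟨a, ha⟩)).ne')
  have hN0 : N 0 = 0 := by simpa using hsmul 0 0
  refine ⟨max C 0, le_max_right _ _, fun a => ?_⟩
  rcases eq_or_ne a 0 with rfl | ha
  · simp [hN0]
  have hnorm : 0 < ‖a‖ := norm_pos_iff.mpr ha
  have hunit := hC (‖a‖⁻¹ • a) (by simp [norm_smul, hnorm.ne'])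
  rw [Pi.inv_apply, hsmul, abs_of_pos (inv_pos.2 hnorm), mul_inv, inv_inv, norm_mul, norm_norm,
    norm_inv, Real.norm_of_nonneg (hpos a ha).le, ← div_eq_mul_inv,
    div_le_iff₀ (hpos a ha)] at hunit
  exact hunit.trans (by gcongr; exacts [(hpos a ha).le, le_max_left _ _])

theorem abs_sum_mul_pow_le {k : ℕ} (a : Fin k → ℝ) {x : ℝ} (hx : |x| ≤ 1) :
    |∑ j, a j * x ^ (j : ℕ)| ≤ k * ‖a‖ :=
  calc |∑ j, a j * x ^ (j : ℕ)| ≤ ∑ j, |a j * x ^ (j : ℕ)| := Finset.abs_sum_le_sum_abs _ _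
    _ ≤ ∑ _j : Fin k, ‖a‖ := Finset.sum_le_sum fun j _ => by
      rw [abs_mul, abs_pow]
      exact (mul_le_of_le_one_right (abs_nonneg _) (pow_le_one₀ (abs_nonneg x) hx)).trans
        (norm_le_pi_norm a j)
    _ = k * ‖a‖ := by simp

theorem integral_abs_sum_mul_pow_pos {k : ℕ} {a : Fin k → ℝ} (ha : a ≠ 0) :
    0 < ∫ x in (0 : ℝ)..1, |∑ j, a j * x ^ (j : ℕ)| := by
  set p := (Polynomial.degreeLTEquiv ℝ k).symm a
  have hp_eval (x : ℝ) : (p : Polynomial ℝ).eval x = ∑ j, a j * x ^ (j : ℕ) := by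
    simpa [p] using Polynomial.eval_eq_sum_degreeLTEquiv p.2 x
  have hp : (p : Polynomial ℝ) ≠ 0 := by simpa [p] using ha
  obtain ⟨c, hc, hpc⟩ :=
    (Icc_infinite zero_lt_one).exists_notMem_finite (Polynomial.finite_setOfPred_isRoot hp)
  refine intervalIntegral.integral_pos zero_lt_one (by fun_prop) (fun _ _ => abs_nonneg _)
    ⟨c, hc, ?_⟩
  rw [← hp_eval]
  exact abs_pos.2 hpc

theorem exists_abs_sum_mul_pow_le_mul_integral (k : ℕ) :
    ∃ C ≥ 0, ∀ (a : Fin k → ℝ), ∀ x ∈ Icc (0 : ℝ) 1,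
      |∑ j, a j * x ^ (j : ℕ)| ≤ C * ∫ y in (0 : ℝ)..1, |∑ j, a j * y ^ (j : ℕ)| := by
  obtain ⟨C, hC0, hC⟩ := exists_norm_le_mul_of_continuous_of_pos
    (N := fun a : Fin k → ℝ => ∫ y in (0 : ℝ)..1, |∑ j, a j * y ^ (j : ℕ)|)
    (intervalIntegral.continuous_parametric_intervalIntegral_of_continuous' (by fun_prop) _ _)
    (fun c a => by
      simp only [Pi.smul_apply, smul_eq_mul, mul_assoc, ← Finset.mul_sum, abs_mul,
        intervalIntegral.integral_const_mul])
    (fun _ => integral_abs_sum_mul_pow_pos)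
  refine ⟨k * C, by positivity, fun a x hx => ?_⟩
  calc |∑ j, a j * x ^ (j : ℕ)| ≤ k * ‖a‖ :=
        abs_sum_mul_pow_le a (abs_le.2 ⟨by linarith [hx.1], hx.2⟩)
    _ ≤ k * (C * ∫ y in (0 : ℝ)..1, |∑ j, a j * y ^ (j : ℕ)|) := by gcongr; exact hC a
    _ = _ := by ring

theorem iteratedDerivWithin_subset {𝕜 F : Type*} [NontriviallyNormedField 𝕜]
    [NormedAddCommGroup F] [NormedSpace 𝕜 F] {f : 𝕜 → F} {s t : Set 𝕜} {x : 𝕜} {n : ℕ}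
    (st : s ⊆ t) (hs : UniqueDiffOn 𝕜 s) (ht : UniqueDiffOn 𝕜 t) (hf : ContDiffOn 𝕜 n f t)
    (hx : x ∈ s) : iteratedDerivWithin n f s x = iteratedDerivWithin n f t x := by
  simp only [iteratedDerivWithin_eq_iteratedFDerivWithin,
    iteratedFDerivWithin_subset st hs ht hf hx]

theorem taylorWithinEval_subset {f : ℝ → ℝ} {s t : Set ℝ} {x₀ : ℝ} {n : ℕ} (st : s ⊆ t)
    (hs : UniqueDiffOn ℝ s) (ht : UniqueDiffOn ℝ t) (hf : ContDiffOn ℝ n f t) (hx₀ : x₀ ∈ s)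
    (x : ℝ) : taylorWithinEval f n s x₀ x = taylorWithinEval f n t x₀ x := by
  simp only [taylor_within_apply]
  refine Finset.sum_congr rfl fun k hk => ?_
  rw [iteratedDerivWithin_subset st hs ht (hf.of_le ?_) hx₀]
  exact_mod_cast Finset.mem_range_succ_iff.1 hk

theorem abs_sub_taylorWithinEval_le {f : ℝ → ℝ} {a b L : ℝ} {m : ℕ}
    (hf : ContDiffOn ℝ m f (Icc a b))
    (hosc : ∀ u ∈ Icc a b, ∀ v ∈ Icc a b,
      |iteratedDerivWithin m f (Icc a b) u - iteratedDerivWithin m f (Icc a b) v| ≤ L)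
    {y : ℝ} (hy : y ∈ Icc a b) :
    |f y - taylorWithinEval f m (Icc a b) a y| ≤ L * (y - a) ^ m / m ! := by
  have ha : a ∈ Icc a b := ⟨le_rfl, hy.1.trans hy.2⟩
  have hL : 0 ≤ L := (abs_nonneg _).trans (hosc a ha a ha)
  rcases hy.1.eq_or_lt with rfl | hay
  · simp only [taylorWithinEval_self, sub_self, abs_zero]
    positivity
  cases m with
  | zero => simpa using hosc y hy a ha
  | succ n =>
    have hsub : Icc a y ⊆ Icc a b := Icc_subset_Icc_right hy.2
    have hy_uniq : UniqueDiffOn ℝ (Icc a y) := uniqueDiffOn_Icc hay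
    have hb_uniq : UniqueDiffOn ℝ (Icc a b) := uniqueDiffOn_Icc (hay.trans_le hy.2)
    have hfy : ContDiffOn ℝ (n + 1 : ℕ) f (Icc a y) := hf.mono hsub
    obtain ⟨ξ, hξ, hrem⟩ := taylor_mean_remainder_lagrange (n := n) hay.ne
      (by rw [uIcc_of_le hay.le]; exact hfy.of_succ)
      (by
        rw [uIcc_of_le hay.le, uIoo_of_le hay.le]
        exact (hfy.differentiableOn_iteratedDerivWithin (by norm_cast; omega) hy_uniq).mono
          Ioo_subset_Icc_self)
    rw [uIoo_of_le hay.le] at hξ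
    rw [uIcc_of_le hay.le,
      taylorWithinEval_subset hsub hy_uniq hb_uniq hf.of_succ (left_mem_Icc.2 hay.le),
      iteratedDerivWithin_subset hsub hy_uniq hb_uniq hf (Ioo_subset_Icc_self hξ)] at hrem
    have hξ' : ξ ∈ Icc a b := hsub (Ioo_subset_Icc_self hξ)
    -- Lagrange's remainder of order `n`, minus the top term of the Taylor polynomial of order `n+1`
    have hsplit : f y - taylorWithinEval f (n + 1) (Icc a b) a y =
        (iteratedDerivWithin (n + 1) f (Icc a b) ξ - iteratedDerivWithin (n + 1) f (Icc a b) a) *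
          ((y - a) ^ (n + 1) / (n + 1)!) := by
      rw [taylorWithinEval_succ, sub_add_eq_sub_sub, hrem, smul_eq_mul, Nat.factorial_succ]
      push_cast
      ring
    rw [hsplit, abs_mul, abs_of_nonneg (a := (y - a) ^ (n + 1) / (n + 1)!)
      (by have := hay.le; positivity), mul_div_assoc]
    gcongr
    exact hosc ξ hξ' a ha

theorem taylorWithinEval_zero_eq_sum (f : ℝ → ℝ) (n : ℕ) (s : Set ℝ) (y : ℝ) :
    taylorWithinEval f n s 0 y =
      ∑ j : Fin (n + 1), iteratedDerivWithin j f s 0 / j ! * y ^ (j : ℕ) := by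
  rw [taylor_within_apply, ← Fin.sum_univ_eq_sum_range]
  refine Finset.sum_congr rfl fun j _ => ?_
  rw [smul_eq_mul, sub_zero]
  ring

theorem integral_abs_le_of_abs_sub_le {f g : ℝ → ℝ} {a b L : ℝ} (hab : a ≤ b)
    (hf0 : ∀ x ∈ Icc a b, 0 ≤ f x) (hf : IntervalIntegrable f volume a b)
    (hg : IntervalIntegrable g volume a b) (hfg : ∀ x ∈ Icc a b, |f x - g x| ≤ L) :
    ∫ x in a..b, |g x| ≤ (∫ x in a..b, f x) + L * (b - a) :=
  calc ∫ x in a..b, |g x| ≤ ∫ x in a..b, (f x + L) :=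
        intervalIntegral.integral_mono_on hab hg.abs (hf.add intervalIntegrable_const)
          fun x hx => by
            have := abs_sub_abs_le_abs_sub (g x) (f x)
            rw [abs_sub_comm, abs_of_nonneg (hf0 x hx)] at this
            linarith [hfg x hx]
    _ = (∫ x in a..b, f x) + L * (b - a) := by
      rw [intervalIntegral.integral_add hf intervalIntegrable_const,
        intervalIntegral.integral_const, smul_eq_mul, mul_comm]

theorem holder_class_uniformly_bounded (β L : ℝ) (hβ : 0 < β) (hL : 0 < L) :
    ∃ M : ℝ, ∀ f : ℝ → ℝ,
      (∀ x ∈ Icc (0:ℝ) 1, 0 ≤ f x) →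
      (∫ x in (0:ℝ)..1, f x) = 1 →
      ContDiffOn ℝ (⌈β⌉₊ - 1 : ℕ) f (Icc 0 1) →
      (∀ x ∈ Icc (0:ℝ) 1, ∀ y ∈ Icc (0:ℝ) 1,
        |iteratedDerivWithin (⌈β⌉₊ - 1) f (Icc 0 1) x -
            iteratedDerivWithin (⌈β⌉₊ - 1) f (Icc 0 1) y| ≤
          L * |x - y| ^ (β - ((⌈β⌉₊ : ℝ) - 1))) →
      ∀ x ∈ Icc (0:ℝ) 1, |f x| ≤ M := by
  set m := ⌈β⌉₊ - 1
  have hexp : 0 ≤ β - ((⌈β⌉₊ : ℝ) - 1) := by linarith [Nat.ceil_lt_add_one hβ.le (R := ℝ)]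
  obtain ⟨C, hC0, hC⟩ := exists_abs_sum_mul_pow_le_mul_integral (m + 1)
  refine ⟨C * (1 + L) + L, fun f hf0 hf1 hfc hfH x hx => ?_⟩
  have hosc : ∀ u ∈ Icc (0 : ℝ) 1, ∀ v ∈ Icc (0 : ℝ) 1,
      |iteratedDerivWithin m f (Icc 0 1) u - iteratedDerivWithin m f (Icc 0 1) v| ≤ L :=
    fun u hu v hv => (hfH u hu v hv).trans <| mul_le_of_le_one_right hL.le <|
      Real.rpow_le_one (abs_nonneg _) (abs_sub_le_of_nonneg_of_le hu.1 hu.2 hv.1 hv.2) hexp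
  set P : ℝ → ℝ :=
    fun y => ∑ j : Fin (m + 1), iteratedDerivWithin j f (Icc 0 1) 0 / j ! * y ^ (j : ℕ)
  have hfP : ∀ y ∈ Icc (0 : ℝ) 1, |f y - P y| ≤ L := fun y hy => by
    calc |f y - P y| ≤ L * (y - 0) ^ m / m ! := by
          simpa only [taylorWithinEval_zero_eq_sum] using abs_sub_taylorWithinEval_le hfc hosc hy
      _ ≤ L * (y - 0) ^ m := div_le_self (by have := hy.1; positivity) (mod_cast m.factorial_pos)
      _ ≤ L := mul_le_of_le_one_right hL.le <|
          pow_le_one₀ (by simpa using hy.1) (by simpa using hy.2)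
  have hPint : ∫ y in (0 : ℝ)..1, |P y| ≤ 1 + L := by
    simpa [hf1] using integral_abs_le_of_abs_sub_le zero_le_one hf0
      (hfc.continuousOn.intervalIntegrable_of_Icc zero_le_one)
      (Continuous.intervalIntegrable (by fun_prop) _ _) hfP
  calc |f x| ≤ |f x - P x| + |P x| := norm_le_norm_sub_add (f x) (P x)
    _ ≤ L + C * (1 + L) := add_le_add (hfP x hx) ((hC _ x hx).trans (by gcongr))
    _ = C * (1 + L) + L := add_comm _ _
end

section
/- Let 0 < β ≤ 2, L > 0. There exists a constant C > 0 such that for every density f in the Hölder class Σ(β,L) on [0,1], every b ∈ (0,1), and every t ∈ [0,1]: |E(f(ξ_{t,b})) - f(t)| ≤ C L b^{β/2}, where ξ_{t,b} has Beta distribution with parameters t/b+1 and (1-t)/b+1. -/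
open MeasureTheory Set

noncomputable def betaMeasure (t b : ℝ) : Measure ℝ :=
  volume.withDensity (fun x => ENNReal.ofReal (Set.indicator (Set.Icc 0 1) (betaKernel t b) x))

/-!
The bias is `∫₀¹ (f x - f t) K(x) dx` for the Beta kernel `K`. In both smoothness regimes
`f x - f t = c (x - t) + R x` with `|R x| ≤ L |x - t| ^ β`: take `c = 0` when `β ≤ 1` and
`c = f'(t)` when `β > 1`. In the latter case `f'` oscillates by at most `L` on `[0, 1]`, so a
derivative larger than `L + 2` in absolute value would make `f` grow too fast to have integral `1`.

From `Γ(a + 1) = a Γ(a)` the Beta law of parameters `t/b + 1`, `(1 - t)/b + 1` has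
`E(ξ - t) = b (1 - 2t)/(1 + 2b)` and `E(ξ - t)² ≤ b`; the pointwise inequality
`|u| ^ β ≤ b ^ (β/2) + u² b ^ (β/2 - 1)` then gives `E|ξ - t| ^ β ≤ 2 b ^ (β/2)`. Altogether the bias
is at most `(L + 2) b + 2 L b ^ (β/2) ≤ (3L + 2) b ^ (β/2)`.
-/

open Filter Topology

lemma ofReal_betaFn_s16 (a c : ℝ) : (betaFn a c : ℂ) = Complex.betaIntegral a c := by
  rw [betaFn, ← intervalIntegral.integral_ofReal]
  refine intervalIntegral.integral_congr fun x hx => ?_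
  rw [uIcc_of_le zero_le_one] at hx
  simp only [Complex.ofReal_mul, Complex.ofReal_cpow hx.1, Complex.ofReal_cpow (sub_nonneg.2 hx.2)]
  push_cast
  rfl

lemma betaFn_eq_Gamma {a c : ℝ} (ha : 0 < a) (hc : 0 < c) :
    betaFn a c = Real.Gamma a * Real.Gamma c / Real.Gamma (a + c) := by
  rw [eq_div_iff (Real.Gamma_pos_of_pos (add_pos ha hc)).ne', ← Complex.ofReal_inj]
  push_cast
  rw [← Complex.Gamma_ofReal, ← Complex.Gamma_ofReal, ← Complex.Gamma_ofReal, ofReal_betaFn_s16,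
    Complex.Gamma_mul_Gamma_eq_betaIntegral (by simpa) (by simpa), mul_comm]
  push_cast
  rfl

lemma betaFn_pos_s16 {a c : ℝ} (ha : 0 < a) (hc : 0 < c) : 0 < betaFn a c := by
  rw [betaFn_eq_Gamma ha hc]
  have := Real.Gamma_pos_of_pos ha
  have := Real.Gamma_pos_of_pos hc
  have := Real.Gamma_pos_of_pos (add_pos ha hc)
  positivity

lemma betaFn_add_one_left_s16 {a c : ℝ} (ha : 0 < a) (hc : 0 < c) :
    betaFn (a + 1) c = a / (a + c) * betaFn a c := by
  have hac := add_pos ha hc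
  rw [betaFn_eq_Gamma (by linarith) hc, betaFn_eq_Gamma ha hc, add_right_comm,
    Real.Gamma_add_one ha.ne', Real.Gamma_add_one hac.ne']
  have := (Real.Gamma_pos_of_pos hac).ne'
  field_simp

lemma integral_pow_mul_rpow_mul_rpow {p : ℝ} (hp : 0 ≤ p) (q : ℝ) (n : ℕ) :
    ∫ x in (0:ℝ)..1, x ^ n * (x ^ p * (1 - x) ^ q) = betaFn (p + n + 1) (q + 1) := by
  refine intervalIntegral.integral_congr fun x hx => ?_
  rw [uIcc_of_le zero_le_one] at hx
  simp only [add_sub_cancel_right]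
  rw [Real.rpow_add_of_nonneg hx.1 hp n.cast_nonneg, Real.rpow_natCast]
  ring

lemma abs_rpow_le_rpow_add_sq_mul_rpow {β s u : ℝ} (hβ0 : 0 ≤ β) (hβ2 : β ≤ 2) (hs : 0 < s) :
    |u| ^ β ≤ s ^ (β / 2) + u ^ 2 * s ^ (β / 2 - 1) := by
  have hsqrt : ∀ γ : ℝ, √s ^ γ = s ^ (γ / 2) := fun γ => by
    rw [Real.sqrt_eq_rpow, ← Real.rpow_mul hs.le]
    ring_nf
  rcases le_or_gt |u| √s with h | h
  · calc |u| ^ β ≤ √s ^ β := Real.rpow_le_rpow (abs_nonneg u) h hβ0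
      _ = s ^ (β / 2) := hsqrt β
      _ ≤ _ := le_add_of_nonneg_right (by positivity)
  · have hu : 0 < |u| := (Real.sqrt_nonneg s).trans_lt h
    calc |u| ^ β = u ^ 2 * |u| ^ (β - 2) := by
          rw [← sq_abs, ← Real.rpow_natCast, ← Real.rpow_add hu]
          norm_num
      _ ≤ u ^ 2 * √s ^ (β - 2) := mul_le_mul_of_nonneg_left
          (Real.rpow_le_rpow_of_nonpos (Real.sqrt_pos.2 hs) h.le (by linarith)) (sq_nonneg u)
      _ = u ^ 2 * s ^ (β / 2 - 1) := by rw [hsqrt]; ring_nf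
      _ ≤ _ := le_add_of_nonneg_left (by positivity)

lemma div_add_one_pos {s b : ℝ} (hs : 0 ≤ s) (hb : 0 < b) : 0 < s / b + 1 := by
  have := div_nonneg hs hb.le
  linarith

section BetaKernel

variable {t b : ℝ}

lemma betaFn_div_add_one_pos (hb : 0 < b) (ht : t ∈ Icc (0:ℝ) 1) :
    0 < betaFn (t / b + 1) ((1 - t) / b + 1) :=
  betaFn_pos_s16 (div_add_one_pos ht.1 hb) (div_add_one_pos (sub_nonneg.2 ht.2) hb)

lemma continuous_betaKernel (hb : 0 < b) (ht : t ∈ Icc (0:ℝ) 1) :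
    Continuous (betaKernel t b) :=
  ((Real.continuous_rpow_const (div_nonneg ht.1 hb.le)).mul
    ((Real.continuous_rpow_const (div_nonneg (sub_nonneg.2 ht.2) hb.le)).comp
      (continuous_const.sub continuous_id))).div_const _

lemma betaKernel_nonneg (hb : 0 < b) (ht : t ∈ Icc (0:ℝ) 1) {x : ℝ} (hx : x ∈ Icc (0:ℝ) 1) :
    0 ≤ betaKernel t b x := by
  have := betaFn_div_add_one_pos hb ht
  have := Real.rpow_nonneg hx.1 (t / b)
  have := Real.rpow_nonneg (sub_nonneg.2 hx.2) ((1 - t) / b)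
  unfold betaKernel
  positivity

lemma integral_betaMeasure (hb : 0 < b) (ht : t ∈ Icc (0:ℝ) 1) (g : ℝ → ℝ) :
    ∫ x, g x ∂betaMeasure t b = ∫ x in (0:ℝ)..1, g x * betaKernel t b x := by
  rw [betaMeasure, integral_withDensity_eq_integral_toReal_smul
    ((continuous_betaKernel hb ht).measurable.indicator measurableSet_Icc).ennreal_ofReal
    (Eventually.of_forall fun _ => ENNReal.ofReal_lt_top),
    intervalIntegral.integral_of_le zero_le_one, ← integral_Icc_eq_integral_Ioc,
    ← integral_indicator measurableSet_Icc]
  congr 1 with x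
  by_cases hx : x ∈ Icc (0:ℝ) 1
  · simp [hx, ENNReal.toReal_ofReal (betaKernel_nonneg hb ht hx), mul_comm]
  · simp [hx]

lemma integral_pow_mul_betaKernel (hb : 0 < b) (ht : t ∈ Icc (0:ℝ) 1) (n : ℕ) :
    ∫ x in (0:ℝ)..1, x ^ n * betaKernel t b x
      = betaFn (t / b + n + 1) ((1 - t) / b + 1) / betaFn (t / b + 1) ((1 - t) / b + 1) := by
  simp only [betaKernel, mul_div_assoc', intervalIntegral.integral_div]
  rw [integral_pow_mul_rpow_mul_rpow (div_nonneg ht.1 hb.le)]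

lemma integral_betaKernel (hb : 0 < b) (ht : t ∈ Icc (0:ℝ) 1) :
    ∫ x in (0:ℝ)..1, betaKernel t b x = 1 := by
  simpa [(betaFn_div_add_one_pos hb ht).ne'] using integral_pow_mul_betaKernel hb ht 0

lemma integral_mul_betaKernel (hb : 0 < b) (ht : t ∈ Icc (0:ℝ) 1) :
    ∫ x in (0:ℝ)..1, x * betaKernel t b x = (t + b) / (1 + 2 * b) := by
  have hp := div_add_one_pos ht.1 hb
  have hq := div_add_one_pos (sub_nonneg.2 ht.2) hb
  have h := integral_pow_mul_betaKernel hb ht 1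
  rw [Nat.cast_one, betaFn_add_one_left_s16 hp hq,
    mul_div_cancel_right₀ _ (betaFn_div_add_one_pos hb ht).ne'] at h
  simp only [pow_one] at h
  rw [h, div_eq_div_iff (by positivity) (by positivity)]
  field_simp
  ring

lemma integral_sq_mul_betaKernel (hb : 0 < b) (ht : t ∈ Icc (0:ℝ) 1) :
    ∫ x in (0:ℝ)..1, x ^ 2 * betaKernel t b x
      = (t + b) * (t + 2 * b) / ((1 + 2 * b) * (1 + 3 * b)) := by
  have hp := div_add_one_pos ht.1 hb
  have hq := div_add_one_pos (sub_nonneg.2 ht.2) hb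
  have h := integral_pow_mul_betaKernel hb ht 2
  rw [show t / b + ((2:ℕ):ℝ) + 1 = t / b + 1 + 1 + 1 by push_cast; ring,
    betaFn_add_one_left_s16 (by linarith) hq, betaFn_add_one_left_s16 hp hq, ← mul_assoc,
    mul_div_cancel_right₀ _ (betaFn_div_add_one_pos hb ht).ne'] at h
  rw [h, div_mul_div_comm, div_eq_div_iff (by positivity) (by positivity)]
  field_simp
  ring

lemma integral_sub_mul_betaKernel (hb : 0 < b) (ht : t ∈ Icc (0:ℝ) 1) :
    ∫ x in (0:ℝ)..1, (x - t) * betaKernel t b x = b * (1 - 2 * t) / (1 + 2 * b) := by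
  have hK := continuous_betaKernel hb ht
  simp_rw [sub_mul]
  rw [intervalIntegral.integral_sub (Continuous.intervalIntegrable (by fun_prop) _ _)
    (Continuous.intervalIntegrable (by fun_prop) _ _), intervalIntegral.integral_const_mul,
    integral_mul_betaKernel hb ht, integral_betaKernel hb ht]
  field_simp
  ring

lemma abs_integral_sub_mul_betaKernel_le (hb : 0 < b) (ht : t ∈ Icc (0:ℝ) 1) :
    |∫ x in (0:ℝ)..1, (x - t) * betaKernel t b x| ≤ b := by
  rw [integral_sub_mul_betaKernel hb ht, abs_div, abs_mul, abs_of_pos hb,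
    abs_of_pos (by positivity : (0:ℝ) < 1 + 2 * b), div_le_iff₀ (by positivity)]
  have : |1 - 2 * t| ≤ 1 := abs_le.2 ⟨by linarith [ht.2], by linarith [ht.1]⟩
  nlinarith

lemma integral_sub_sq_mul_betaKernel (hb : 0 < b) (ht : t ∈ Icc (0:ℝ) 1) :
    ∫ x in (0:ℝ)..1, (x - t) ^ 2 * betaKernel t b x
      = b * (t * (1 - t) + 2 * b * (1 - 3 * t + 3 * t ^ 2)) / ((1 + 2 * b) * (1 + 3 * b)) := by
  have hK := continuous_betaKernel hb ht
  have hexpand : ∀ x, (x - t) ^ 2 * betaKernel t b x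
      = x ^ 2 * betaKernel t b x - 2 * t * (x * betaKernel t b x) + t ^ 2 * betaKernel t b x :=
    fun x => by ring
  simp_rw [hexpand]
  rw [intervalIntegral.integral_add (Continuous.intervalIntegrable (by fun_prop) _ _)
      (Continuous.intervalIntegrable (by fun_prop) _ _),
    intervalIntegral.integral_sub (Continuous.intervalIntegrable (by fun_prop) _ _)
      (Continuous.intervalIntegrable (by fun_prop) _ _),
    intervalIntegral.integral_const_mul, intervalIntegral.integral_const_mul,
    integral_sq_mul_betaKernel hb ht, integral_mul_betaKernel hb ht, integral_betaKernel hb ht]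
  field_simp
  ring

lemma integral_sub_sq_mul_betaKernel_le (hb : 0 < b) (ht : t ∈ Icc (0:ℝ) 1) :
    ∫ x in (0:ℝ)..1, (x - t) ^ 2 * betaKernel t b x ≤ b := by
  rw [integral_sub_sq_mul_betaKernel hb ht, div_le_iff₀ (by positivity)]
  have h1 : t * (1 - t) ≤ 1 := by nlinarith [ht.1, ht.2]
  have h2 : 1 - 3 * t + 3 * t ^ 2 ≤ 1 := by nlinarith [ht.1, ht.2]
  gcongr
  nlinarith

lemma integral_abs_sub_rpow_mul_betaKernel_le {β : ℝ} (hb : 0 < b) (ht : t ∈ Icc (0:ℝ) 1)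
    (hβ0 : 0 ≤ β) (hβ2 : β ≤ 2) :
    ∫ x in (0:ℝ)..1, |x - t| ^ β * betaKernel t b x ≤ 2 * b ^ (β / 2) := by
  have hK := continuous_betaKernel hb ht
  calc ∫ x in (0:ℝ)..1, |x - t| ^ β * betaKernel t b x
      ≤ ∫ x in (0:ℝ)..1, b ^ (β / 2) * betaKernel t b x
          + b ^ (β / 2 - 1) * ((x - t) ^ 2 * betaKernel t b x) := by
        refine intervalIntegral.integral_mono_on zero_le_one
          (Continuous.intervalIntegrable (by fun_prop (disch := assumption)) _ _)
          (Continuous.intervalIntegrable (by fun_prop) _ _) fun x hx => ?_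
        calc |x - t| ^ β * betaKernel t b x
            ≤ (b ^ (β / 2) + (x - t) ^ 2 * b ^ (β / 2 - 1)) * betaKernel t b x :=
              mul_le_mul_of_nonneg_right (abs_rpow_le_rpow_add_sq_mul_rpow hβ0 hβ2 hb)
                (betaKernel_nonneg hb ht hx)
          _ = _ := by ring
    _ = b ^ (β / 2) + b ^ (β / 2 - 1) * ∫ x in (0:ℝ)..1, (x - t) ^ 2 * betaKernel t b x := by
        rw [intervalIntegral.integral_add (Continuous.intervalIntegrable (by fun_prop) _ _)
          (Continuous.intervalIntegrable (by fun_prop) _ _), intervalIntegral.integral_const_mul,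
          intervalIntegral.integral_const_mul, integral_betaKernel hb ht, mul_one]
    _ ≤ b ^ (β / 2) + b ^ (β / 2 - 1) * b := by
        gcongr
        exact integral_sub_sq_mul_betaKernel_le hb ht
    _ = 2 * b ^ (β / 2) := by
        rw [Real.rpow_sub_one hb.ne', div_mul_cancel₀ _ hb.ne']
        ring

lemma abs_integral_mul_betaKernel_le_of_abs_le {β L : ℝ} {R : ℝ → ℝ} (hb : 0 < b)
    (ht : t ∈ Icc (0:ℝ) 1) (hβ0 : 0 ≤ β) (hβ2 : β ≤ 2) (hL : 0 ≤ L)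
    (hR : ContinuousOn R (Icc 0 1)) (hRt : ∀ x ∈ Icc (0:ℝ) 1, |R x| ≤ L * |x - t| ^ β) :
    |∫ x in (0:ℝ)..1, R x * betaKernel t b x| ≤ 2 * L * b ^ (β / 2) := by
  have hK := continuous_betaKernel hb ht
  calc |∫ x in (0:ℝ)..1, R x * betaKernel t b x|
      ≤ ∫ x in (0:ℝ)..1, |R x * betaKernel t b x| :=
        intervalIntegral.abs_integral_le_integral_abs zero_le_one
    _ ≤ ∫ x in (0:ℝ)..1, L * (|x - t| ^ β * betaKernel t b x) := by
        refine intervalIntegral.integral_mono_on zero_le_one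
          ((hR.mul hK.continuousOn).intervalIntegrable_of_Icc zero_le_one).abs
          (Continuous.intervalIntegrable (by fun_prop (disch := assumption)) _ _) fun x hx => ?_
        rw [abs_mul, abs_of_nonneg (betaKernel_nonneg hb ht hx), ← mul_assoc]
        exact mul_le_mul_of_nonneg_right (hRt x hx) (betaKernel_nonneg hb ht hx)
    _ ≤ L * (2 * b ^ (β / 2)) := by
        rw [intervalIntegral.integral_const_mul]
        exact mul_le_mul_of_nonneg_left
          (integral_abs_sub_rpow_mul_betaKernel_le hb ht hβ0 hβ2) hL
    _ = 2 * L * b ^ (β / 2) := by ring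

lemma abs_integral_mul_betaKernel_le {β L c : ℝ} {h : ℝ → ℝ} (hb : 0 < b)
    (ht : t ∈ Icc (0:ℝ) 1) (hβ0 : 0 ≤ β) (hβ2 : β ≤ 2) (hL : 0 ≤ L)
    (hh : ContinuousOn h (Icc 0 1))
    (hlin : ∀ x ∈ Icc (0:ℝ) 1, |h x - c * (x - t)| ≤ L * |x - t| ^ β) :
    |∫ x in (0:ℝ)..1, h x * betaKernel t b x| ≤ |c| * b + 2 * L * b ^ (β / 2) := by
  have hK := continuous_betaKernel hb ht
  have hR : ContinuousOn (fun x => h x - c * (x - t)) (Icc 0 1) := hh.sub (by fun_prop)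
  have hRK : IntervalIntegrable (fun x => (h x - c * (x - t)) * betaKernel t b x) volume 0 1 :=
    (hR.mul hK.continuousOn).intervalIntegrable_of_Icc zero_le_one
  have hsplit : ∫ x in (0:ℝ)..1, h x * betaKernel t b x
      = c * (∫ x in (0:ℝ)..1, (x - t) * betaKernel t b x)
        + ∫ x in (0:ℝ)..1, (h x - c * (x - t)) * betaKernel t b x := by
    rw [← intervalIntegral.integral_const_mul, ← intervalIntegral.integral_add
      (Continuous.intervalIntegrable (by fun_prop) _ _) hRK]
    congr 1 with x
    ring
  calc |∫ x in (0:ℝ)..1, h x * betaKernel t b x|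
      ≤ |c| * |∫ x in (0:ℝ)..1, (x - t) * betaKernel t b x|
        + |∫ x in (0:ℝ)..1, (h x - c * (x - t)) * betaKernel t b x| := by
        rw [hsplit, ← abs_mul]
        exact abs_add_le _ _
    _ ≤ |c| * b + 2 * L * b ^ (β / 2) := by
        gcongr
        · exact abs_integral_sub_mul_betaKernel_le hb ht
        · exact abs_integral_mul_betaKernel_le_of_abs_le hb ht hβ0 hβ2 hL hR hlin

lemma integral_betaMeasure_sub_eq {f : ℝ → ℝ} (hb : 0 < b) (ht : t ∈ Icc (0:ℝ) 1)
    (hf : ContinuousOn f (Icc 0 1)) :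
    ∫ x, f x ∂betaMeasure t b - f t = ∫ x in (0:ℝ)..1, (f x - f t) * betaKernel t b x := by
  have hK := continuous_betaKernel hb ht
  have hfK : IntervalIntegrable (fun x => f x * betaKernel t b x) volume 0 1 :=
    (hf.mul hK.continuousOn).intervalIntegrable_of_Icc zero_le_one
  simp_rw [sub_mul]
  rw [integral_betaMeasure hb ht, intervalIntegral.integral_sub hfK
    (Continuous.intervalIntegrable (by fun_prop) _ _), intervalIntegral.integral_const_mul,
    integral_betaKernel hb ht, mul_one]

end BetaKernel

lemma continuousOn_of_abs_sub_le_mul_rpow {f : ℝ → ℝ} {s : Set ℝ} {L β : ℝ} (hβ : 0 < β)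
    (hf : ∀ x ∈ s, ∀ y ∈ s, |f x - f y| ≤ L * |x - y| ^ β) : ContinuousOn f s := by
  intro x₀ hx₀
  have hbound : Tendsto (fun x => L * |x - x₀| ^ β) (𝓝[s] x₀) (𝓝 0) := by
    have : Continuous fun x : ℝ => L * |x - x₀| ^ β := by fun_prop (disch := positivity)
    simpa [Real.zero_rpow hβ.ne'] using (this.tendsto x₀).mono_left nhdsWithin_le_nhds
  refine tendsto_iff_norm_sub_tendsto_zero.2
    (squeeze_zero' (Eventually.of_forall fun _ => norm_nonneg _) ?_ hbound)
  filter_upwards [self_mem_nhdsWithin] with x hx using hf x hx x₀ hx₀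

lemma exists_mem_uIcc_sub_eq_derivWithin_mul {f : ℝ → ℝ} {l r x y : ℝ}
    (hf : DifferentiableOn ℝ f (Icc l r)) (hx : x ∈ Icc l r) (hy : y ∈ Icc l r) :
    ∃ ξ ∈ uIcc x y, f y - f x = derivWithin f (Icc l r) ξ * (y - x) := by
  wlog hxy : x < y generalizing x y
  · rcases (not_lt.1 hxy).eq_or_lt with rfl | hyx
    · exact ⟨y, left_mem_uIcc, by simp⟩
    · obtain ⟨ξ, hξ, h⟩ := this hy hx hyx
      exact ⟨ξ, uIcc_comm y x ▸ hξ, by linear_combination -h⟩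
  have hsub : Icc x y ⊆ Icc l r := Icc_subset_Icc hx.1 hy.2
  obtain ⟨ξ, hξ, h⟩ := exists_deriv_eq_slope f hxy (hf.continuousOn.mono hsub)
    (hf.mono (Ioo_subset_Icc_self.trans hsub))
  refine ⟨ξ, Icc_subset_uIcc (Ioo_subset_Icc_self hξ), ?_⟩
  rw [derivWithin_of_mem_nhds (Icc_mem_nhds (hx.1.trans_lt hξ.1) (hξ.2.trans_le hy.2)), h,
    div_mul_cancel₀ _ (sub_ne_zero.2 hxy.ne')]

lemma abs_sub_sub_derivWithin_mul_le {f : ℝ → ℝ} {l r x y L α : ℝ} (hα : 0 ≤ α) (hL : 0 ≤ L)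
    (hf : DifferentiableOn ℝ f (Icc l r))
    (hf' : ∀ u ∈ Icc l r, ∀ v ∈ Icc l r,
      |derivWithin f (Icc l r) u - derivWithin f (Icc l r) v| ≤ L * |u - v| ^ α)
    (hx : x ∈ Icc l r) (hy : y ∈ Icc l r) :
    |f y - f x - derivWithin f (Icc l r) x * (y - x)| ≤ L * |y - x| ^ (α + 1) := by
  obtain ⟨ξ, hξ, hmvt⟩ := exists_mem_uIcc_sub_eq_derivWithin_mul hf hx hy
  rw [hmvt, ← sub_mul, abs_mul, Real.rpow_add_one' (abs_nonneg _) (by linarith), ← mul_assoc]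
  gcongr
  calc |derivWithin f (Icc l r) ξ - derivWithin f (Icc l r) x| ≤ L * |ξ - x| ^ α :=
        hf' ξ (uIcc_subset_Icc hx hy hξ) x hx
    _ ≤ L * |y - x| ^ α := mul_le_mul_of_nonneg_left
        (Real.rpow_le_rpow (abs_nonneg _) (abs_sub_left_of_mem_uIcc hξ) hα) hL

lemma le_two_of_mul_le_of_integral_eq_one {f : ℝ → ℝ} {M : ℝ} (hf : ContinuousOn f (Icc 0 1))
    (hf1 : ∫ x in (0:ℝ)..1, f x = 1) (hM : ∀ x ∈ Icc (0:ℝ) 1, M * x ≤ f x) : M ≤ 2 := by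
  have h := intervalIntegral.integral_mono_on zero_le_one
    (Continuous.intervalIntegrable (μ := volume) (by fun_prop) _ _)
    (hf.intervalIntegrable_of_Icc zero_le_one) hM
  rw [intervalIntegral.integral_const_mul, integral_id, hf1] at h
  linarith

lemma abs_derivWithin_le_of_integral_eq_one {f : ℝ → ℝ} {L t : ℝ}
    (hf : DifferentiableOn ℝ f (Icc 0 1)) (hf0 : ∀ x ∈ Icc (0:ℝ) 1, 0 ≤ f x)
    (hf1 : ∫ x in (0:ℝ)..1, f x = 1)
    (hosc : ∀ x ∈ Icc (0:ℝ) 1, ∀ y ∈ Icc (0:ℝ) 1,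
      |derivWithin f (Icc 0 1) x - derivWithin f (Icc 0 1) y| ≤ L)
    (ht : t ∈ Icc (0:ℝ) 1) :
    |derivWithin f (Icc 0 1) t| ≤ L + 2 := by
  have h0 : (0:ℝ) ∈ Icc (0:ℝ) 1 := left_mem_Icc.2 zero_le_one
  have h1 : (1:ℝ) ∈ Icc (0:ℝ) 1 := right_mem_Icc.2 zero_le_one
  have hupper : derivWithin f (Icc 0 1) t - L ≤ 2 := by
    refine le_two_of_mul_le_of_integral_eq_one hf.continuousOn hf1 fun x hx => ?_
    obtain ⟨ξ, hξ, hmvt⟩ := exists_mem_uIcc_sub_eq_derivWithin_mul hf h0 hx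
    have hξt := (abs_le.1 (hosc t ht ξ (uIcc_subset_Icc h0 hx hξ))).2
    nlinarith [hf0 0 h0, hx.1]
  have hflip : MapsTo (fun x : ℝ => 1 - x) (Icc 0 1) (Icc 0 1) :=
    fun x hx => ⟨by linarith [hx.2], by linarith [hx.1]⟩
  have hlower : -derivWithin f (Icc 0 1) t - L ≤ 2 := by
    refine le_two_of_mul_le_of_integral_eq_one (f := fun x => f (1 - x))
      (hf.continuousOn.comp (by fun_prop) hflip)
      (by rw [intervalIntegral.integral_comp_sub_left f 1]; norm_num [hf1]) fun x hx => ?_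
    obtain ⟨ξ, hξ, hmvt⟩ := exists_mem_uIcc_sub_eq_derivWithin_mul hf h1 (hflip hx)
    have hξt := (abs_le.1 (hosc t ht ξ (uIcc_subset_Icc h1 (hflip hx) hξ))).1
    nlinarith [hf0 1 h1, hx.1]
  exact abs_le.2 ⟨by linarith, by linarith⟩

theorem bias_bound (β L : ℝ) (hβ0 : 0 < β) (hβ2 : β ≤ 2) (hL : 0 < L) :
    ∃ C > (0:ℝ), ∀ f : ℝ → ℝ,
      (∀ x ∈ Icc (0:ℝ) 1, 0 ≤ f x) →
      (∫ x in (0:ℝ)..1, f x) = 1 →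
      (β ≤ 1 → ∀ x ∈ Icc (0:ℝ) 1, ∀ y ∈ Icc (0:ℝ) 1, |f x - f y| ≤ L * |x - y| ^ β) →
      (1 < β → DifferentiableOn ℝ f (Icc 0 1) ∧
        ∀ x ∈ Icc (0:ℝ) 1, ∀ y ∈ Icc (0:ℝ) 1,
          |derivWithin f (Icc 0 1) x - derivWithin f (Icc 0 1) y| ≤ L * |x - y| ^ (β - 1)) →
      ∀ b ∈ Ioo (0:ℝ) 1, ∀ t ∈ Icc (0:ℝ) 1,
        |(∫ x, f x ∂(betaMeasure t b)) - f t| ≤ C * L * b ^ (β / 2) := by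
  refine ⟨3 + 2 / L, by positivity, fun f hf0 hf1 hHolder hSmooth b hb t ht => ?_⟩
  obtain ⟨c, hc, hf, hlin⟩ : ∃ c, |c| ≤ L + 2 ∧ ContinuousOn f (Icc 0 1) ∧
      ∀ x ∈ Icc (0:ℝ) 1, |f x - f t - c * (x - t)| ≤ L * |x - t| ^ β := by
    rcases le_or_gt β 1 with hβ1 | hβ1
    · exact ⟨0, by simp; linarith, continuousOn_of_abs_sub_le_mul_rpow hβ0 (hHolder hβ1),
        fun x hx => by simpa using hHolder hβ1 x hx t ht⟩
    obtain ⟨hd, hd'⟩ := hSmooth hβ1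
    have hosc : ∀ x ∈ Icc (0:ℝ) 1, ∀ y ∈ Icc (0:ℝ) 1,
        |derivWithin f (Icc 0 1) x - derivWithin f (Icc 0 1) y| ≤ L := fun x hx y hy =>
      (hd' x hx y hy).trans (mul_le_of_le_one_right hL.le (Real.rpow_le_one (abs_nonneg _)
        (abs_sub_le_of_nonneg_of_le hx.1 hx.2 hy.1 hy.2) (by linarith)))
    refine ⟨_, abs_derivWithin_le_of_integral_eq_one hd hf0 hf1 hosc ht, hd.continuousOn,
      fun x hx => ?_⟩
    simpa using abs_sub_sub_derivWithin_mul_le (α := β - 1) (by linarith) hL.le hd hd' ht hx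
  have hbβ : b ≤ b ^ (β / 2) := Real.self_le_rpow_of_le_one hb.1.le hb.2.le (by linarith)
  rw [integral_betaMeasure_sub_eq hb.1 ht hf]
  calc _ ≤ |c| * b + 2 * L * b ^ (β / 2) :=
        abs_integral_mul_betaKernel_le hb.1 ht hβ0.le hβ2 hL.le (hf.sub continuousOn_const) hlin
    _ ≤ (L + 2) * b ^ (β / 2) + 2 * L * b ^ (β / 2) := by gcongr; exact hb.1.le
    _ = (3 + 2 / L) * L * b ^ (β / 2) := by field_simp; ring
end
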